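/- arXiv:2507.23725 — 5 statements merged into one kernel-verified Lean document; each statement's English description precedes it below -/
import Mathlib

section
/- Let each f_i : ℝ^d → ℝ be convex and differentiable, let x* minimize x ↦ Σ_{i=1}^m f_i(x), set X* = 1(x*)ᵀ and Y* := −∇F(X*), and note Y* ∈ range(I − W̃) (equivalently Σ_i ∇f_i(x*) = 0). Define F(X) := Σ_{i=1}^m f_i(x_i) and, for δ > 0, ℳ(X) := max( δ·⟨(I − W)X, X⟩, F(X) − F(X*) + ⟨Y*, X⟩ ), where ⟨A, B⟩ := tr(AᵀB). Then: (i) F(X) − F(X*) + ⟨Y*, X⟩ ≥ 0 for every X ∈ ℝ^{m×d}; (ii) ℳ(X) ≥ 0 for every X; and (iii) ℳ(X) = 0 if and only if X = 1 xᵀ for some x ∈ ℝ^d with Σ_i f_i(x) ≤ Σ_i f_i(x*), i.e., x is also a minimizer. -/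
open Matrix Finset
open scoped RealInnerProductSpace

noncomputable section

/-- `ℝ^d` with the Euclidean inner product. -/
abbrev Vec (d : ℕ) := EuclideanSpace ℝ (Fin d)

/-- The `i`-th row of a matrix, viewed as a vector of `ℝ^d`. -/
def mrow {m d : ℕ} (X : Matrix (Fin m) (Fin d) ℝ) (i : Fin m) : Vec d := WithLp.toLp 2 (fun j => X i j)

/-- `∇F(X) = [∇f₁(x₁), …, ∇f_m(x_m)]ᵀ`. -/
def matGrad {m d : ℕ} (f : Fin m → Vec d → ℝ) (X : Matrix (Fin m) (Fin d) ℝ) :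
    Matrix (Fin m) (Fin d) ℝ := fun i j => gradient (f i) (mrow X i) j

/-- Trace inner product `⟨A, B⟩ = tr(AᵀB)`. -/
def minner {m d : ℕ} (A B : Matrix (Fin m) (Fin d) ℝ) : ℝ := Matrix.trace (Aᵀ * B)

/-- Squared Frobenius norm. -/
def fro2 {m d : ℕ} (A : Matrix (Fin m) (Fin d) ℝ) : ℝ := ∑ i, ∑ j, (A i j)^2

/-- Frobenius norm. -/
def fro {m d : ℕ} (A : Matrix (Fin m) (Fin d) ℝ) : ℝ := Real.sqrt (fro2 A)

/-- A gossip matrix for the graph `G`: symmetric, rows summing to one (doubly stochastic),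
positive diagonal, positive on edges, vanishing off edges. -/
structure IsGossip {m : ℕ} (G : SimpleGraph (Fin m)) (Wt : Matrix (Fin m) (Fin m) ℝ) : Prop where
  symm : Wt.IsSymm
  row_sum : ∀ i, ∑ j, Wt i j = 1
  diag_pos : ∀ i, 0 < Wt i i
  adj_pos : ∀ i j, G.Adj i j → 0 < Wt i j
  not_adj : ∀ i j, i ≠ j → ¬G.Adj i j → Wt i j = 0


lemma grad_ineq' {d : ℕ} {f : Vec d → ℝ} (hdiff : Differentiable ℝ f)
    (hconv : ConvexOn ℝ Set.univ f) (x y : Vec d) :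
    f x + ⟪gradient f x, y - x⟫ ≤ f y := by
  set φ : ℝ → ℝ := fun t => f (x + t • (y - x)) with hφ
  have hline : ∀ t : ℝ, HasDerivAt (fun t : ℝ => x + t • (y - x)) (y - x) t := by
    intro t
    simpa using ((hasDerivAt_id t).smul_const (y - x)).const_add x
  have hφd : ∀ t : ℝ, HasDerivAt φ (fderiv ℝ f (x + t • (y - x)) (y - x)) t := fun t =>
    (hdiff _).hasFDerivAt.comp_hasDerivAt t (hline t)
  have hconvφ : ConvexOn ℝ Set.univ φ := by
    have := hconv.comp_affineMap (AffineMap.lineMap x y : ℝ →ᵃ[ℝ] Vec d)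
    have heq : (f ∘ ⇑(AffineMap.lineMap x y : ℝ →ᵃ[ℝ] Vec d)) = φ := by
      funext t
      simp [hφ, AffineMap.lineMap_apply, vsub_eq_sub, vadd_eq_add, add_comm]
    rw [heq] at this
    simpa using this
  have hd0 : deriv φ 0 ≤ φ 1 - φ 0 := by
    have := hconvφ.deriv_le_slope (Set.mem_univ (0:ℝ)) (Set.mem_univ 1) zero_lt_one
      (hφd 0).differentiableAt
    simpa [slope_def_field] using this
  have hder : deriv φ 0 = ⟪gradient f x, y - x⟫ := by
    rw [(hφd 0).deriv]
    have hg : HasFDerivAt f ((InnerProductSpace.toDual ℝ _) (gradient f x) : Vec d →L[ℝ] ℝ) x := by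
      have := (hdiff x).hasGradientAt
      rwa [hasGradientAt_iff_hasFDerivAt] at this
    rw [zero_smul, add_zero, hg.fderiv, InnerProductSpace.toDual_apply_apply]
  have h0 : φ 0 = f x := by simp [hφ]
  have h1 : φ 1 = f y := by
    simp only [hφ, one_smul]
    congr 1
    abel
  rw [hder, h0, h1] at hd0
  linarith

lemma quad_eq' {m : ℕ} (Wt : Matrix (Fin m) (Fin m) ℝ) (hs : Wt.IsSymm)
    (hrow : ∀ i, ∑ j, Wt i j = 1) (v : Fin m → ℝ) :
    ∑ i, v i * (((1 : Matrix (Fin m) (Fin m) ℝ) - Wt).mulVec v i)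
      = (1/2) * ∑ i, ∑ j, Wt i j * (v i - v j)^2 := by
  have hsym : ∀ i j, Wt i j = Wt j i := fun i j => (hs.apply i j).symm
  have hcol : ∀ j, ∑ i, Wt i j = 1 := by
    intro j
    calc ∑ i, Wt i j = ∑ i, Wt j i := Finset.sum_congr rfl fun i _ => hsym i j
      _ = 1 := hrow j
  have hL : ∑ i, v i * (((1 : Matrix (Fin m) (Fin m) ℝ) - Wt).mulVec v i)
      = ∑ i, v i ^ 2 - ∑ i, ∑ j, v i * (Wt i j * v j) := by
    rw [← Finset.sum_sub_distrib]
    refine Finset.sum_congr rfl fun i _ => ?_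
    rw [Matrix.sub_mulVec, Matrix.one_mulVec]
    simp [Matrix.mulVec, dotProduct, mul_sub, Finset.mul_sum, sq]
  have h1 : ∑ i, ∑ j, Wt i j * v i ^ 2 = ∑ i, v i ^ 2 := by
    refine Finset.sum_congr rfl fun i _ => ?_
    rw [← Finset.sum_mul, hrow i, one_mul]
  have h2 : ∑ i, ∑ j, Wt i j * v j ^ 2 = ∑ i, v i ^ 2 := by
    rw [Finset.sum_comm]
    refine Finset.sum_congr rfl fun j _ => ?_
    rw [← Finset.sum_mul, hcol j, one_mul]
  have h3 : ∑ i, ∑ j, Wt i j * (v i - v j)^2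
      = ∑ i, ∑ j, (Wt i j * v i ^ 2 - 2 * (v i * (Wt i j * v j)) + Wt i j * v j ^ 2) := by
    refine Finset.sum_congr rfl fun i _ => Finset.sum_congr rfl fun j _ => ?_
    ring
  rw [hL, h3]
  simp only [Finset.sum_add_distrib, Finset.sum_sub_distrib, h1, h2, ← Finset.mul_sum]
  ring

lemma const_of_edge' {m : ℕ} {G : SimpleGraph (Fin m)} (hG : G.Connected)
    {v : Fin m → ℝ} (step : ∀ i j, G.Adj i j → v i = v j) : ∀ i j, v i = v j := by
  have key : ∀ {i j : Fin m}, G.Walk i j → v i = v j := by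
    intro i j w
    induction w with
    | nil => rfl
    | cons h p ih => exact (step _ _ h).trans ih
  intro i j
  exact (hG.preconnected i j).elim fun w => key w

lemma exists_preimage' {m : ℕ} (hm : 2 ≤ m)
    (Wt : Matrix (Fin m) (Fin m) ℝ) (hs : Wt.IsSymm) (hrow : ∀ i, ∑ j, Wt i j = 1)
    (hker : ∀ v : Fin m → ℝ, ((1 : Matrix (Fin m) (Fin m) ℝ) - Wt).mulVec v = 0 → ∀ i j, v i = v j)
    (y : Fin m → ℝ) (hy : ∑ i, y i = 0) :
    ∃ z : Fin m → ℝ, ((1 : Matrix (Fin m) (Fin m) ℝ) - Wt).mulVec z = y := by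
  classical
  set A : Matrix (Fin m) (Fin m) ℝ := (1 : Matrix (Fin m) (Fin m) ℝ) - Wt with hA
  set T : (Fin m → ℝ) →ₗ[ℝ] (Fin m → ℝ) := Matrix.mulVecLin A with hT
  set s : (Fin m → ℝ) →ₗ[ℝ] ℝ := ∑ i, LinearMap.proj i with hsdef
  have hs_apply : ∀ w : Fin m → ℝ, s w = ∑ i, w i := by
    intro w; simp [hsdef]
  have hcol : ∀ j, ∑ i, Wt i j = 1 := by
    intro j
    calc ∑ i, Wt i j = ∑ i, Wt j i :=
          Finset.sum_congr rfl fun i _ => ((hs.apply i j).symm)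
      _ = 1 := hrow j
  have hO : Nonempty (Fin m) := ⟨⟨0, by omega⟩⟩
  have hker_eq : LinearMap.ker T = Submodule.span ℝ {(fun _ => 1 : Fin m → ℝ)} := by
    apply le_antisymm
    · intro v hv
      have hv' : A.mulVec v = 0 := hv
      have hc := hker v hv'
      have : v = v hO.some • (fun _ => 1 : Fin m → ℝ) := by
        funext i; simp [hc i hO.some]
      rw [this]
      exact Submodule.smul_mem _ _ (Submodule.subset_span rfl)
    · rw [Submodule.span_le, Set.singleton_subset_iff]
      have : A.mulVec (fun _ => 1) = 0 := by
        funext i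
        simp [hA, Matrix.mulVec, dotProduct, Matrix.sub_apply, Matrix.one_apply,
          Finset.sum_sub_distrib, hrow i]
      exact this
  have hone_ne : (fun _ => 1 : Fin m → ℝ) ≠ 0 := by
    intro h
    have := congrFun h hO.some
    simp at this
  have hfk : Module.finrank ℝ (LinearMap.ker T) = 1 := by
    rw [hker_eq]
    exact finrank_span_singleton hone_ne
  have hdim : Module.finrank ℝ (Fin m → ℝ) = m := by simp
  have hrangeT : Module.finrank ℝ (LinearMap.range T) = m - 1 := by
    have := LinearMap.finrank_range_add_finrank_ker T
    rw [hfk, hdim] at this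
    omega
  have hs_surj : LinearMap.range s = ⊤ := by
    rw [LinearMap.range_eq_top]
    intro r
    exact ⟨Pi.single hO.some r, by simp [hs_apply, Finset.sum_pi_single']⟩
  have hkers : Module.finrank ℝ (LinearMap.ker s) = m - 1 := by
    have := LinearMap.finrank_range_add_finrank_ker s
    rw [hs_surj, hdim] at this
    simp [Module.finrank_self] at this
    omega
  have hle : LinearMap.range T ≤ LinearMap.ker s := by
    rintro _ ⟨v, rfl⟩
    have hTv : ∀ i, T v i = ∑ k, A i k * v k := fun i => rfl
    have hcolA : ∀ k, ∑ i, A i k = 0 := by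
      intro k
      simp [hA, Matrix.sub_apply, Finset.sum_sub_distrib, Matrix.one_apply, hcol k]
    have : s (T v) = 0 := by
      rw [hs_apply]
      calc ∑ i, T v i = ∑ i, ∑ k, A i k * v k := by simp [hTv]
        _ = ∑ k, (∑ i, A i k) * v k := by
            rw [Finset.sum_comm]
            exact Finset.sum_congr rfl fun k _ => (Finset.sum_mul _ _ _).symm
        _ = 0 := by simp [hcolA]
    exact this
  have heq : LinearMap.range T = LinearMap.ker s :=
    Submodule.eq_of_le_of_finrank_eq hle (by rw [hrangeT, hkers])
  have hy' : y ∈ LinearMap.ker s := by simp [LinearMap.mem_ker, hs_apply, hy]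
  rw [← heq] at hy'
  obtain ⟨z, hz⟩ := hy'
  exact ⟨z, hz⟩

lemma sum_grad_zero' {m d : ℕ} (f : Fin m → Vec d → ℝ) (hdiff : ∀ i, Differentiable ℝ (f i))
    (xs : Vec d) (hxs : ∀ x : Vec d, ∑ i, f i xs ≤ ∑ i, f i x) :
    ∑ i, gradient (f i) xs = 0 := by
  set S : Vec d → ℝ := fun x => ∑ i, f i x with hS
  have hmin : IsLocalMin S xs := Filter.Eventually.of_forall hxs
  have hfd : fderiv ℝ S xs = 0 := hmin.fderiv_eq_zero
  have hsum : fderiv ℝ S xs = ∑ i, fderiv ℝ (f i) xs := by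
    rw [hS]
    exact fderiv_fun_sum fun i _ => (hdiff i).differentiableAt
  have hz : ∑ i, fderiv ℝ (f i) xs = 0 := by rw [← hsum, hfd]
  calc ∑ i, gradient (f i) xs
      = (InnerProductSpace.toDual ℝ (Vec d)).symm (∑ i, fderiv ℝ (f i) xs) := by
        rw [map_sum]; rfl
    _ = 0 := by rw [hz]; simp

lemma minner_eq' {m d : ℕ} (A B : Matrix (Fin m) (Fin d) ℝ) :
    Matrix.trace (Aᵀ * B) = ∑ i, ∑ j, A i j * B i j := by
  rw [Matrix.trace]
  simp only [Matrix.diag, Matrix.mul_apply, Matrix.transpose_apply]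
  exact Finset.sum_comm

/-- properties of the merit function
`ℳ(X) = max(δ⟨(I−W)X, X⟩, F(X) − F(X*) + ⟨Y*, X⟩)` in the convex case:
`Y* ∈ range(I − W̃)`, both arguments of the max are nonnegative, and `ℳ(X) = 0` iff
`X = 1xᵀ` for some minimizer `x`. -/
theorem merit_function_convex {m d : ℕ} (hm : 2 ≤ m)
    (G : SimpleGraph (Fin m)) (hG : G.Connected)
    (Wt : Matrix (Fin m) (Fin m) ℝ) (hWt : IsGossip G Wt)
    (c : ℝ) (hc : c ∈ Set.Ioc (0 : ℝ) (1/2))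
    (W : Matrix (Fin m) (Fin m) ℝ)
    (hW : W = (1 - c) • (1 : Matrix (Fin m) (Fin m) ℝ) + c • Wt)
    (f : Fin m → Vec d → ℝ)
    (hdiff : ∀ i, Differentiable ℝ (f i))
    (hconv : ∀ i, ConvexOn ℝ Set.univ (f i))
    (xs : Vec d) (hxs : ∀ x : Vec d, ∑ i, f i xs ≤ ∑ i, f i x)
    (Xs : Matrix (Fin m) (Fin d) ℝ) (hXs : Xs = fun _ j => xs j)
    (Ys : Matrix (Fin m) (Fin d) ℝ) (hYs : Ys = - matGrad f Xs)
    (δ : ℝ) (hδ : 0 < δ)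
    (Mer : Matrix (Fin m) (Fin d) ℝ → ℝ)
    (hMer : Mer = fun X => max (δ * minner ((1 - W) * X) X)
      ((∑ i, f i (mrow X i)) - (∑ i, f i xs) + minner Ys X)) :
    (∃ Z : Matrix (Fin m) (Fin d) ℝ, Ys = ((1 : Matrix (Fin m) (Fin m) ℝ) - Wt) * Z) ∧
    (∀ X : Matrix (Fin m) (Fin d) ℝ,
      0 ≤ (∑ i, f i (mrow X i)) - (∑ i, f i xs) + minner Ys X) ∧
    (∀ X : Matrix (Fin m) (Fin d) ℝ, 0 ≤ Mer X) ∧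
    (∀ X : Matrix (Fin m) (Fin d) ℝ,
      Mer X = 0 ↔ ∃ x : Vec d, (∀ i j, X i j = x j) ∧ ∑ i, f i x ≤ ∑ i, f i xs) := by
  classical
  obtain ⟨hc0, hc2⟩ := hc
  have hO : (0 : ℕ) < m := by omega
  set g : Fin m → Vec d := fun i => gradient (f i) xs with hg
  have hmXs : ∀ i, mrow Xs i = xs := by
    intro i
    rw [hXs]
    ext j
    rfl
  have hYs' : ∀ i j, Ys i j = -(g i j) := by
    intro i j
    rw [hYs]
    simp only [Matrix.neg_apply, matGrad, hmXs, hg]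
  have hgsum : ∑ i, g i = 0 := sum_grad_zero' f hdiff xs hxs
  have hgj : ∀ j, ∑ i, g i j = 0 := by
    intro j
    have h2 : (∑ i, g i) j = (0 : Vec d) j := congrArg (fun v : Vec d => v j) hgsum
    rw [WithLp.ofLp_sum, Finset.sum_apply] at h2
    simpa using h2
  have hinner : ∀ u v : Vec d, (⟪u, v⟫ : ℝ) = ∑ j, u j * v j := by
    intro u v
    simp [PiLp.inner_apply, RCLike.inner_apply, conj_trivial]
    exact Finset.sum_congr rfl fun _ _ => mul_comm _ _
  have hWnn : ∀ i j, 0 ≤ Wt i j := by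
    intro i j
    by_cases hij : i = j
    · subst hij; exact (hWt.diag_pos i).le
    · by_cases hadj : G.Adj i j
      · exact (hWt.adj_pos i j hadj).le
      · rw [hWt.not_adj i j hij hadj]
  have hQconst : ∀ v : Fin m → ℝ,
      (∑ i, ∑ j, Wt i j * (v i - v j)^2 = 0) → ∀ i j, v i = v j := by
    intro v hv
    have h1 := (Finset.sum_eq_zero_iff_of_nonneg (fun i _ =>
      Finset.sum_nonneg fun j _ => mul_nonneg (hWnn i j) (sq_nonneg _))).1 hv
    have h2 : ∀ i j, Wt i j * (v i - v j)^2 = 0 := by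
      intro i j
      exact (Finset.sum_eq_zero_iff_of_nonneg (fun j _ =>
        mul_nonneg (hWnn i j) (sq_nonneg _))).1 (h1 i (Finset.mem_univ i)) j (Finset.mem_univ j)
    have step : ∀ i j, G.Adj i j → v i = v j := by
      intro i j hadj
      have hpos := hWt.adj_pos i j hadj
      have hsq : (v i - v j)^2 = 0 := by
        rcases mul_eq_zero.1 (h2 i j) with h | h
        · exact absurd h (ne_of_gt hpos)
        · exact h
      have := pow_eq_zero_iff (n := 2) (by norm_num) |>.1 hsq
      linarith [sub_eq_zero.1 this]
    exact const_of_edge' hG step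
  set Q : (Fin m → ℝ) → ℝ :=
    fun v => ∑ i, v i * (((1 : Matrix (Fin m) (Fin m) ℝ) - Wt).mulVec v i) with hQdef
  have hQeq : ∀ v, Q v = (1/2) * ∑ i, ∑ j, Wt i j * (v i - v j)^2 :=
    fun v => quad_eq' Wt hWt.symm hWt.row_sum v
  have hQnn : ∀ v, 0 ≤ Q v := by
    intro v
    rw [hQeq v]
    have : 0 ≤ ∑ i, ∑ j, Wt i j * (v i - v j)^2 :=
      Finset.sum_nonneg fun i _ => Finset.sum_nonneg fun j _ =>
        mul_nonneg (hWnn i j) (sq_nonneg _)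
    linarith
  have hQzero : ∀ v, Q v = 0 → ∀ i j, v i = v j := by
    intro v hv
    have h := hQeq v
    rw [hv] at h
    exact hQconst v (by linarith)
  have hQconstzero : ∀ v : Fin m → ℝ, (∀ i j, v i = v j) → Q v = 0 := by
    intro v hv
    have : ∑ i, ∑ j, Wt i j * (v i - v j)^2 = 0 :=
      Finset.sum_eq_zero fun i _ => Finset.sum_eq_zero fun j _ => by rw [hv i j]; ring
    rw [hQeq v, this]
    ring
  have hkermulvec : ∀ v : Fin m → ℝ,
      ((1 : Matrix (Fin m) (Fin m) ℝ) - Wt).mulVec v = 0 → ∀ i j, v i = v j := by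
    intro v hv
    apply hQzero
    have hz : ∀ i, ((1 : Matrix (Fin m) (Fin m) ℝ) - Wt).mulVec v i = 0 :=
      fun i => congrFun hv i
    exact Finset.sum_eq_zero fun i _ => by rw [hz i]; ring
  -- Part A
  have hcolYs : ∀ j, ∑ i, Ys i j = 0 := by
    intro j
    calc ∑ i, Ys i j = ∑ i, -(g i j) := Finset.sum_congr rfl fun i _ => hYs' i j
      _ = -∑ i, g i j := by rw [Finset.sum_neg_distrib]
      _ = 0 := by rw [hgj j, neg_zero]
  have partA : ∃ Z : Matrix (Fin m) (Fin d) ℝ,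
      Ys = ((1 : Matrix (Fin m) (Fin m) ℝ) - Wt) * Z := by
    choose z hz using fun j =>
      exists_preimage' hm Wt hWt.symm hWt.row_sum hkermulvec (fun i => Ys i j) (hcolYs j)
    refine ⟨fun k j => z j k, ?_⟩
    ext i j
    show Ys i j = ∑ k, ((1 : Matrix (Fin m) (Fin m) ℝ) - Wt) i k * z j k
    exact (congrFun (hz j) i).symm
  -- minner Ys X formula
  have hminnerYs : ∀ X : Matrix (Fin m) (Fin d) ℝ,
      minner Ys X = -∑ i, (⟪g i, mrow X i⟫ : ℝ) := by
    intro X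
    rw [minner, minner_eq']
    have hrow : ∀ i, ∑ j, Ys i j * X i j = -(⟪g i, mrow X i⟫ : ℝ) := by
      intro i
      rw [hinner]
      rw [← Finset.sum_neg_distrib]
      refine Finset.sum_congr rfl fun j _ => ?_
      rw [hYs' i j]
      show -(g i j) * X i j = -(g i j * mrow X i j)
      have : mrow X i j = X i j := by simp [mrow]
      rw [this]; ring
    rw [Finset.sum_congr rfl fun i _ => hrow i, Finset.sum_neg_distrib]
  -- Part B
  have partB : ∀ X : Matrix (Fin m) (Fin d) ℝ,
      0 ≤ (∑ i, f i (mrow X i)) - (∑ i, f i xs) + minner Ys X := by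
    intro X
    have hkey : ∑ i, (f i xs + (⟪g i, mrow X i - xs⟫ : ℝ)) ≤ ∑ i, f i (mrow X i) :=
      Finset.sum_le_sum fun i _ => grad_ineq' (hdiff i) (hconv i) xs (mrow X i)
    have hsplit : ∑ i, (f i xs + (⟪g i, mrow X i - xs⟫ : ℝ))
        = ∑ i, f i xs + (∑ i, (⟪g i, mrow X i⟫ : ℝ) - ∑ i, (⟪g i, xs⟫ : ℝ)) := by
      rw [Finset.sum_add_distrib]
      congr 1
      rw [← Finset.sum_sub_distrib]
      exact Finset.sum_congr rfl fun i _ => inner_sub_right _ _ _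
    have hzero : ∑ i, (⟪g i, xs⟫ : ℝ) = 0 := by
      rw [← sum_inner, hgsum, inner_zero_left]
    rw [hsplit, hzero] at hkey
    rw [hminnerYs X]
    linarith
  -- Part C
  have partC : ∀ X : Matrix (Fin m) (Fin d) ℝ, 0 ≤ Mer X := by
    intro X
    rw [hMer]
    exact le_trans (partB X) (le_max_right _ _)
  -- first argument formula
  have h1W : (1 : Matrix (Fin m) (Fin m) ℝ) - W
      = c • ((1 : Matrix (Fin m) (Fin m) ℝ) - Wt) := by
    rw [hW]
    ext i j
    by_cases hij : i = j <;>
      simp [Matrix.sub_apply, Matrix.add_apply, Matrix.smul_apply, Matrix.one_apply, hij] <;>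
      ring
  have hfirst : ∀ X : Matrix (Fin m) (Fin d) ℝ,
      minner ((1 - W) * X) X = c * ∑ j, Q (fun k => X k j) := by
    intro X
    rw [minner, minner_eq', Finset.sum_comm, Finset.mul_sum]
    refine Finset.sum_congr rfl fun j _ => ?_
    rw [hQdef]
    rw [Finset.mul_sum]
    refine Finset.sum_congr rfl fun i _ => ?_
    rw [h1W, Matrix.smul_mul, Matrix.smul_apply, smul_eq_mul, Matrix.mul_apply]
    have : (((1 : Matrix (Fin m) (Fin m) ℝ) - Wt).mulVec (fun k => X k j)) i
        = ∑ k, ((1 : Matrix (Fin m) (Fin m) ℝ) - Wt) i k * X k j := rfl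
    rw [this]
    ring
  have hYXgen : ∀ (X : Matrix (Fin m) (Fin d) ℝ) (x : Vec d),
      (∀ i, mrow X i = x) → minner Ys X = 0 := by
    intro X x hmrow
    rw [hminnerYs X]
    simp_rw [hmrow]
    rw [← sum_inner, hgsum, inner_zero_left, neg_zero]
  refine ⟨partA, partB, partC, ?_⟩
  intro X
  constructor
  · intro hM
    rw [hMer] at hM
    have h2nn := partB X
    have hsQnn : 0 ≤ ∑ j, Q (fun k => X k j) :=
      Finset.sum_nonneg fun j _ => hQnn _
    have h1nn : 0 ≤ δ * minner ((1 - W) * X) X := by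
      rw [hfirst X]
      exact mul_nonneg hδ.le (mul_nonneg hc0.le hsQnn)
    have h1z : δ * minner ((1 - W) * X) X = 0 :=
      le_antisymm (hM ▸ le_max_left _ _) h1nn
    have h2z : (∑ i, f i (mrow X i)) - (∑ i, f i xs) + minner Ys X = 0 :=
      le_antisymm (hM ▸ le_max_right _ _) h2nn
    rw [hfirst X] at h1z
    have hsQ : ∑ j, Q (fun k => X k j) = 0 := by
      rcases mul_eq_zero.1 h1z with h | h
      · exact absurd h (ne_of_gt hδ)
      · rcases mul_eq_zero.1 h with h' | h'
        · exact absurd h' (ne_of_gt hc0)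
        · exact h'
    have hQj : ∀ j, Q (fun k => X k j) = 0 := by
      intro j
      exact (Finset.sum_eq_zero_iff_of_nonneg fun j _ => hQnn _).1 hsQ j (Finset.mem_univ j)
    set x : Vec d := WithLp.toLp 2 (fun j => X ⟨0, hO⟩ j) with hx
    have hXx : ∀ i j, X i j = x j := by
      intro i j
      exact hQzero _ (hQj j) i ⟨0, hO⟩
    have hmrow : ∀ i, mrow X i = x := by
      intro i
      ext j
      exact hXx i j
    refine ⟨x, hXx, ?_⟩
    rw [hYXgen X x hmrow] at h2z
    have hfs : ∑ i, f i (mrow X i) = ∑ i, f i x :=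
      Finset.sum_congr rfl fun i _ => by rw [hmrow i]
    rw [hfs] at h2z
    linarith
  · rintro ⟨x, hXx, hminx⟩
    have hmrow : ∀ i, mrow X i = x := by
      intro i
      ext j
      exact hXx i j
    have hp := partB X
    rw [hYXgen X x hmrow] at hp
    have hfs : ∑ i, f i (mrow X i) = ∑ i, f i x :=
      Finset.sum_congr rfl fun i _ => by rw [hmrow i]
    rw [hfs] at hp
    have h2z : (∑ i, f i (mrow X i)) - (∑ i, f i xs) + minner Ys X = 0 := by
      rw [hYXgen X x hmrow, hfs]
      linarith
    have h1z : minner ((1 - W) * X) X = 0 := by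
      rw [hfirst X]
      have hQ0 : ∀ j, Q (fun k => X k j) = 0 := by
        intro j
        apply hQconstzero
        intro i i'
        rw [hXx i j, hXx i' j]
      rw [Finset.sum_eq_zero fun j _ => hQ0 j, mul_zero]
    rw [hMer]
    show max (δ * minner ((1 - W) * X) X)
      ((∑ i, f i (mrow X i)) - (∑ i, f i xs) + minner Ys X) = 0
    rw [h1z, mul_zero, h2z, max_self]
end
end

section
/- Let f : ℝ^d → ℝ be L-smooth with L > 0, let δ ∈ (0, 1] and θ⁰ > 0, let {x^k}, {y^k} be arbitrary sequences in ℝ^d and {γ^k} ⊂ [1, ∞), and define θ^{k+1} = Backtracking(θ^k, f, x^k, y^k, γ^k, δ) for k ∈ ℕ. Then for every k, the number of stepsize decreases is bounded by |{ j ∈ {0,…,k} : θ^{j+1} < θ^j }| ≤ max(0, log₂(2Lθ⁰/δ)) + Σ_{j=0}^{k} log₂ γ^j. -/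
open Matrix Finset
open scoped RealInnerProductSpace

noncomputable section

/-- The Armijo-type sufficient-decrease condition
`f(x + s y) ≤ f(x) + ⟨∇f(x), s y⟩ + (δ s / 2)‖y‖²` used by the Backtracking procedure. -/
def armijo {d : ℕ} (f : Vec d → ℝ) (x y : Vec d) (δ s : ℝ) : Prop :=
  f (x + s • y) ≤ f x + ⟪gradient f x, s • y⟫ + (δ * s / 2) * ‖y‖^2

lemma descent_lemma {d : ℕ} (f : Vec d → ℝ) (L : ℝ)
    (hdiff : Differentiable ℝ f)
    (hsmooth : ∀ a b : Vec d, ‖gradient f a - gradient f b‖ ≤ L * ‖a - b‖)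
    (x v : Vec d) :
    f (x + v) ≤ f x + ⟪gradient f x, v⟫ + L / 2 * ‖v‖ ^ 2 := by
  set c : ℝ := ⟪gradient f x, v⟫ with hc
  set h : ℝ → ℝ := fun s => f x + s * c + (L * ‖v‖ ^ 2 / 2) * s ^ 2 - f (x + s • v) with hh
  have hcurve : ∀ s : ℝ, HasDerivAt (fun s : ℝ => x + s • v) v s := by
    intro s
    simpa using ((hasDerivAt_id s).smul_const v).const_add x
  have hgd : ∀ s : ℝ, HasDerivAt (fun s : ℝ => f (x + s • v))
      ⟪gradient f (x + s • v), v⟫ s := by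
    intro s
    have hgrad := (hdiff (x + s • v)).hasGradientAt
    have := hgrad.hasFDerivAt.comp_hasDerivAt s (hcurve s)
    simp at this ⊢; exact this
  have hderiv : ∀ s : ℝ, HasDerivAt h
      (c + (L * ‖v‖ ^ 2 / 2) * (2 * s) - ⟪gradient f (x + s • v), v⟫) s := by
    intro s
    have h1 : HasDerivAt (fun s : ℝ => f x + s * c + (L * ‖v‖ ^ 2 / 2) * s ^ 2)
        (c + (L * ‖v‖ ^ 2 / 2) * (2 * s)) s := by
      have := (((hasDerivAt_id s).mul_const c).const_add (f x)).add
        (((hasDerivAt_pow 2 s)).const_mul (L * ‖v‖ ^ 2 / 2))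
      simp [mul_comm, mul_assoc] at this ⊢; exact this
    have := h1.sub (hgd s)
    simp at this ⊢; exact this
  have hmono : MonotoneOn h (Set.Icc (0:ℝ) 1) := by
    apply monotoneOn_of_deriv_nonneg (convex_Icc 0 1)
    · exact fun s _ => ((hderiv s).continuousAt).continuousWithinAt
    · intro s _
      exact ((hderiv s).differentiableAt).differentiableWithinAt
    · intro s hs
      rw [(hderiv s).deriv]
      rw [interior_Icc] at hs
      have hip : ⟪gradient f (x + s • v) - gradient f x, v⟫ ≤ L * s * ‖v‖ ^ 2 := by
        calc ⟪gradient f (x + s • v) - gradient f x, v⟫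
            ≤ ‖gradient f (x + s • v) - gradient f x‖ * ‖v‖ := real_inner_le_norm _ _
          _ ≤ (L * ‖(x + s • v) - x‖) * ‖v‖ :=
              mul_le_mul_of_nonneg_right (hsmooth _ _) (norm_nonneg _)
          _ = L * s * ‖v‖ ^ 2 := by
              simp [norm_smul, abs_of_pos hs.1]; ring
      rw [inner_sub_left] at hip
      have : ⟪gradient f (x + s • v), v⟫ ≤ c + L * s * ‖v‖ ^ 2 := by
        rw [hc]; linarith
      nlinarith
  have h01 := hmono (Set.mem_Icc.mpr ⟨le_refl 0, zero_le_one⟩)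
    (Set.mem_Icc.mpr ⟨zero_le_one, le_refl 1⟩) zero_le_one
  have h0 : h 0 = 0 := by simp [hh]
  have h1 : h 1 = f x + c + L * ‖v‖ ^ 2 / 2 - f (x + v) := by simp [hh]
  rw [h0, h1] at h01
  linarith

/-- along any sequence of Backtracking calls
`θ^{k+1} = Backtracking(θ^k, f, x^k, y^k, γ^k, δ)` (encoded via the least halving exponent
`t k`), the number of stepsize decreases up to iteration `k` is at most
`max(0, log₂(2Lθ⁰/δ)) + Σ_{j=0}^k log₂ γ^j`. -/
theorem backtracking_few_decreases {d : ℕ} (f : Vec d → ℝ) (L : ℝ) (hL : 0 < L)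
    (hdiff : Differentiable ℝ f)
    (hsmooth : ∀ x y : Vec d, ‖gradient f x - gradient f y‖ ≤ L * ‖x - y‖)
    (δ : ℝ) (hδ : δ ∈ Set.Ioc (0 : ℝ) 1)
    (γ : ℕ → ℝ) (hγ : ∀ k, 1 ≤ γ k)
    (x y : ℕ → Vec d)
    (θ : ℕ → ℝ) (hθ0 : 0 < θ 0)
    (t : ℕ → ℕ)
    (ht : ∀ k, armijo f (x k) (y k) δ (γ k * θ k / 2 ^ t k))
    (htmin : ∀ k, ∀ s < t k, ¬ armijo f (x k) (y k) δ (γ k * θ k / 2 ^ s))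
    (hrec : ∀ k, θ (k + 1) = γ k * θ k / 2 ^ t k) :
    ∀ k : ℕ,
      (((Finset.range (k + 1)).filter (fun j => θ (j + 1) < θ j)).card : ℝ) ≤
        max 0 (Real.logb 2 (2 * L * θ 0 / δ)) +
          ∑ j ∈ Finset.range (k + 1), Real.logb 2 (γ j) := by
  obtain ⟨hδ0, hδ1⟩ := hδ
  have hγpos : ∀ k, 0 < γ k := fun k => lt_of_lt_of_le zero_lt_one (hγ k)
  have hθpos : ∀ k, 0 < θ k := by
    intro k
    induction k with
    | zero => exact hθ0
    | succ n ih =>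
      rw [hrec n]
      exact div_pos (mul_pos (hγpos n) ih) (by positivity)
  -- armijo holds for small steps
  have hsmall : ∀ k (s : ℝ), 0 < s → s ≤ δ / L → armijo f (x k) (y k) δ s := by
    intro k s hs hsδ
    unfold armijo
    have hd := descent_lemma f L hdiff hsmooth (x k) (s • y k)
    have hn : ‖s • y k‖ ^ 2 = s ^ 2 * ‖y k‖ ^ 2 := by
      rw [norm_smul]; simp [abs_of_pos hs]; ring
    rw [hn] at hd
    have hLs : L * s ≤ δ := by
      rw [le_div_iff₀ hL] at hsδ; linarith
    nlinarith [sq_nonneg ‖y k‖, hs.le]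
  -- lower bound on θ
  have hlow : ∀ k, min (θ 0) (δ / (2 * L)) ≤ θ k := by
    intro k
    induction k with
    | zero => exact min_le_left _ _
    | succ n ih =>
      rcases Nat.eq_zero_or_pos (t n) with h0 | hpos
      · rw [hrec n, h0]
        simp only [pow_zero, div_one]
        calc min (θ 0) (δ / (2 * L)) ≤ θ n := ih
          _ ≤ γ n * θ n := le_mul_of_one_le_left (hθpos n).le (hγ n)
      · obtain ⟨m, hm⟩ : ∃ m, t n = m + 1 := ⟨t n - 1, by omega⟩
        have hna := htmin n m (by omega)
        have hstep : δ / L < γ n * θ n / 2 ^ m := by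
          by_contra hcon
          push_neg at hcon
          exact hna (hsmall n _ (div_pos (mul_pos (hγpos n) (hθpos n)) (by positivity)) hcon)
        have hkey : δ / (2 * L) < θ (n + 1) := by
          rw [hrec n, hm]
          have e1 : γ n * θ n / 2 ^ (m + 1) = (γ n * θ n / 2 ^ m) / 2 := by
            rw [pow_succ]; ring
          have e2 : δ / (2 * L) = (δ / L) / 2 := by ring
          rw [e1, e2]
          linarith
        exact le_trans (min_le_right _ _) hkey.le
  -- log identity for each step
  have hlog : ∀ j, (t j : ℝ) =
      Real.logb 2 (γ j) + (Real.logb 2 (θ j) - Real.logb 2 (θ (j + 1))) := by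
    intro j
    have h2 : Real.logb 2 (θ (j + 1)) =
        Real.logb 2 (γ j) + Real.logb 2 (θ j) - t j := by
      rw [hrec j, Real.logb_div (ne_of_gt (mul_pos (hγpos j) (hθpos j))) (by positivity),
        Real.logb_mul (ne_of_gt (hγpos j)) (ne_of_gt (hθpos j)), Real.logb_pow,
        Real.logb_self_eq_one (by norm_num)]
      ring
    rw [h2]; ring
  intro k
  -- sum of t's telescopes
  have hsum : ∑ j ∈ Finset.range (k + 1), (t j : ℝ) =
      (∑ j ∈ Finset.range (k + 1), Real.logb 2 (γ j)) +
        (Real.logb 2 (θ 0) - Real.logb 2 (θ (k + 1))) := by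
    rw [← Finset.sum_range_sub' (fun j => Real.logb 2 (θ j)) (k + 1),
      ← Finset.sum_add_distrib]
    exact Finset.sum_congr rfl fun j _ => hlog j
  -- card bound by sum of t's
  have hcard : (((Finset.range (k + 1)).filter (fun j => θ (j + 1) < θ j)).card) ≤
      ∑ j ∈ Finset.range (k + 1), t j := by
    calc ((Finset.range (k + 1)).filter (fun j => θ (j + 1) < θ j)).card
        = ∑ j ∈ (Finset.range (k + 1)).filter (fun j => θ (j + 1) < θ j), 1 := by
          simp
      _ ≤ ∑ j ∈ (Finset.range (k + 1)).filter (fun j => θ (j + 1) < θ j), t j := by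
          apply Finset.sum_le_sum
          intro j hj
          rw [Finset.mem_filter] at hj
          by_contra hcon
          have ht0 : t j = 0 := by omega
          have hθj : θ (j + 1) = γ j * θ j := by
            rw [hrec j, ht0]; simp
          have : θ j ≤ θ (j + 1) := by
            rw [hθj]; exact le_mul_of_one_le_left (hθpos j).le (hγ j)
          linarith [hj.2]
      _ ≤ ∑ j ∈ Finset.range (k + 1), t j :=
          Finset.sum_le_sum_of_subset (Finset.filter_subset _ _)
  have hcardR : ((((Finset.range (k + 1)).filter (fun j => θ (j + 1) < θ j)).card : ℝ)) ≤
      ∑ j ∈ Finset.range (k + 1), (t j : ℝ) := by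
    push_cast
    exact_mod_cast hcard
  rw [hsum] at hcardR
  -- bound the telescoped part
  have htail : Real.logb 2 (θ 0) - Real.logb 2 (θ (k + 1)) ≤
      max 0 (Real.logb 2 (2 * L * θ 0 / δ)) := by
    rcases le_total (θ 0) (δ / (2 * L)) with hmin | hmin
    · have hθle : θ 0 ≤ θ (k + 1) := by
        have := hlow (k + 1)
        rw [min_eq_left hmin] at this
        exact this
      have := Real.logb_le_logb_of_le (by norm_num : (1:ℝ) < 2) hθ0 hθle
      have h0 : (0:ℝ) ≤ max 0 (Real.logb 2 (2 * L * θ 0 / δ)) := le_max_left _ _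
      linarith
    · have hθle : δ / (2 * L) ≤ θ (k + 1) := by
        have := hlow (k + 1)
        rw [min_eq_right hmin] at this
        exact this
      have hl := Real.logb_le_logb_of_le (by norm_num : (1:ℝ) < 2) (by positivity) hθle
      have heq : Real.logb 2 (θ 0) - Real.logb 2 (δ / (2 * L)) =
          Real.logb 2 (2 * L * θ 0 / δ) := by
        rw [← Real.logb_div (ne_of_gt hθ0) (by positivity)]
        congr 1
        field_simp
      have : Real.logb 2 (θ 0) - Real.logb 2 (θ (k + 1)) ≤
          Real.logb 2 (2 * L * θ 0 / δ) := by
        rw [← heq]; linarith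
      exact le_trans this (le_max_right _ _)
  linarith
end
end

section
/- Let G = ([m], E) be a connected undirected graph with diameter D and N_i = {j : (i,j) ∈ E} ∪ {i}. Let {γ^k} ⊂ [1, ∞), let k₀ ∈ ℕ, and let positive reals θ_i^k (i ∈ [m], k₀ ≤ k ≤ k₀ + D − 1) satisfy the no-decrease condition min_{i∈[m]} θ_i^{k+1} = γ^k · min_{i∈[m]} θ_i^k for all k₀ ≤ k < k₀ + D − 1. Define the tracking variables θ̃_i^{k₀} = min_{j∈N_i} θ_j^{k₀} and θ̃_i^{k+1} = min_{j∈N_i} γ^k θ̃_j^k for k₀ ≤ k < k₀ + D − 1. Then every agent recovers the global minimum stepsize at the end of the window: θ̃_i^{k₀+D−1} = min_{j∈[m]} θ_j^{k₀+D−1} for all i ∈ [m]. -/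
open Matrix Finset
open scoped RealInnerProductSpace

noncomputable section

open Classical in
/-- Closed neighborhood `N_i = {j : (i,j) ∈ E} ∪ {i}` of vertex `i`, as a finset. -/
def nbhd {m : ℕ} (G : SimpleGraph (Fin m)) (i : Fin m) : Finset (Fin m) :=
  Finset.univ.filter (fun j => G.Adj i j ∨ j = i)

lemma nbhd_nonempty {m : ℕ} (G : SimpleGraph (Fin m)) (i : Fin m) : (nbhd G i).Nonempty :=
  ⟨i, by simp [nbhd]⟩

/-- `min_{j ∈ N_i} v j` over the closed neighborhood of `i`. -/
def nmin {m : ℕ} (G : SimpleGraph (Fin m)) (i : Fin m) (v : Fin m → ℝ) : ℝ :=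
  (nbhd G i).inf' (nbhd_nonempty G i) v

open Classical in
/-- Ball of radius `t` around `i`. -/
def ball {m : ℕ} (G : SimpleGraph (Fin m)) (t : ℕ) (i : Fin m) : Finset (Fin m) :=
  Finset.univ.filter (fun j => G.dist i j ≤ t)

lemma ball_nonempty {m : ℕ} (G : SimpleGraph (Fin m)) (t : ℕ) (i : Fin m) :
    (ball G t i).Nonempty := ⟨i, by simp [ball, SimpleGraph.dist_self]⟩

/-- Min of `v` over the ball of radius `t` around `i`. -/
def bmin {m : ℕ} (G : SimpleGraph (Fin m)) (t : ℕ) (i : Fin m) (v : Fin m → ℝ) : ℝ :=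
  (ball G t i).inf' (ball_nonempty G t i) v

lemma inf'_const_mul {m : ℕ} (s : Finset (Fin m)) (hs : s.Nonempty) {c : ℝ} (hc : 0 ≤ c)
    (v : Fin m → ℝ) : s.inf' hs (fun j => c * v j) = c * s.inf' hs v := by
  exact (Finset.apply_inf'_eq_inf'_comp hs (fun x : ℝ => c * x)
    (fun x y => by exact mul_min_of_nonneg x y hc)).symm

lemma step_ball {m : ℕ} {G : SimpleGraph (Fin m)} (hG : G.Connected) {i j : Fin m} {t : ℕ}
    (h : G.dist i j ≤ t + 1) : ∃ j' ∈ nbhd G i, G.dist j' j ≤ t := by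
  obtain ⟨p, hp⟩ := hG.exists_walk_length_eq_dist i j
  cases p with
  | nil => exact ⟨i, by simp [nbhd], by simp [SimpleGraph.dist_self]⟩
  | @cons _ b _ hadj q =>
      refine ⟨b, by simp [nbhd, hadj], ?_⟩
      have h1 : G.dist b j ≤ q.length := SimpleGraph.dist_le q
      have h2 : q.length + 1 = G.dist i j := by simpa using hp
      omega

lemma mem_ball_one {m : ℕ} {G : SimpleGraph (Fin m)} (hG : G.Connected) (i : Fin m) :
    nbhd G i = ball G 1 i := by
  ext j
  simp only [nbhd, ball, Finset.mem_filter, Finset.mem_univ, true_and]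
  constructor
  · rintro (h | rfl)
    · exact le_of_eq (SimpleGraph.dist_eq_one_iff_adj.mpr h)
    · simp [SimpleGraph.dist_self]
  · intro h
    rcases Nat.le_one_iff_eq_zero_or_eq_one.mp h with h0 | h1
    · right; exact (hG.dist_eq_zero_iff.mp h0).symm
    · left; exact SimpleGraph.dist_eq_one_iff_adj.mp h1

lemma nmin_bmin {m : ℕ} {G : SimpleGraph (Fin m)} (hG : G.Connected) (t : ℕ) (i : Fin m)
    (v : Fin m → ℝ) : nmin G i (fun j => bmin G t j v) = bmin G (t + 1) i v := by
  apply le_antisymm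
  · apply Finset.le_inf'
    intro j hj
    simp only [ball, Finset.mem_filter] at hj
    obtain ⟨j', hj', hd⟩ := step_ball hG hj.2
    calc nmin G i (fun j => bmin G t j v) ≤ bmin G t j' v := Finset.inf'_le _ hj'
      _ ≤ v j := Finset.inf'_le _ (by simp [ball, hd])
  · apply Finset.le_inf'
    intro j' hj'
    have hsub : ball G t j' ⊆ ball G (t + 1) i := by
      intro j hj
      simp only [ball, Finset.mem_filter, Finset.mem_univ, true_and] at hj ⊢
      have htri := hG.dist_triangle (u := i) (v := j') (w := j)
      have h1 : G.dist i j' ≤ 1 := by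
        have : j' ∈ ball G 1 i := (mem_ball_one hG i) ▸ hj'
        simpa [ball] using this
      omega
    exact Finset.inf'_mono (f := v) hsub (ball_nonempty G t j')

open Classical in
/-- if the global minimum stepsize does not decrease over the window
`[k₀, k₀ + D − 1]` (it is multiplied by `γ^k` at each step), then the tracking variables
`θ̃_i^{k₀} = min_{j∈N_i} θ_j^{k₀}`, `θ̃_i^{k+1} = min_{j∈N_i} γ^k θ̃_j^k` recover the global
minimum stepsize at the end of the window: `θ̃_i^{k₀+D−1} = min_j θ_j^{k₀+D−1}` for all `i`. -/
theorem min_stepsize_tracking {m : ℕ} (G : SimpleGraph (Fin m)) (hG : G.Connected)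
    (D : ℕ) (hD1 : 1 ≤ D) (hD : ∀ i j, G.dist i j ≤ D) (hDex : ∃ i j, G.dist i j = D)
    (γ : ℕ → ℝ) (hγ : ∀ k, 1 ≤ γ k) (k₀ : ℕ)
    (θ : ℕ → Fin m → ℝ)
    (hθpos : ∀ k, k₀ ≤ k → k ≤ k₀ + D - 1 → ∀ i, 0 < θ k i)
    (hnodec : ∀ k, k₀ ≤ k → k < k₀ + D - 1 →
      Finset.univ.inf' (Finset.univ_nonempty_iff.mpr hG.nonempty) (θ (k + 1)) =
        γ k * Finset.univ.inf' (Finset.univ_nonempty_iff.mpr hG.nonempty) (θ k))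
    (θt : ℕ → Fin m → ℝ)
    (hinit : ∀ i, θt k₀ i = nmin G i (θ k₀))
    (hrec : ∀ k, k₀ ≤ k → k < k₀ + D - 1 → ∀ i,
      θt (k + 1) i = nmin G i (fun j => γ k * θt k j)) :
    ∀ i, θt (k₀ + D - 1) i =
      Finset.univ.inf' (Finset.univ_nonempty_iff.mpr hG.nonempty) (θ (k₀ + D - 1)) := by
  obtain ⟨d, rfl⟩ : ∃ d, D = d + 1 := ⟨D - 1, (Nat.succ_pred_eq_of_pos hD1).symm⟩
  have hidx : k₀ + (d + 1) - 1 = k₀ + d := by omega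
  have hne := Finset.univ_nonempty_iff.mpr hG.nonempty
  set P : ℕ → ℝ := fun t => ∏ s ∈ Finset.range t, γ (k₀ + s) with hP
  have hPpos : ∀ t, 0 < P t := fun t =>
    Finset.prod_pos (fun s _ => lt_of_lt_of_le one_pos (hγ _))
  have claim : ∀ t, t ≤ d → ∀ i, θt (k₀ + t) i = P t * bmin G (t + 1) i (θ k₀) := by
    intro t
    induction t with
    | zero =>
        intro _ i
        simp only [Nat.add_zero, hinit, hP, Finset.range_zero, Finset.prod_empty, one_mul]
        unfold nmin bmin
        congr 1
        exact mem_ball_one hG i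
    | succ t ih =>
        intro ht i
        have ht' : t ≤ d := Nat.le_of_succ_le ht
        have hk1 : k₀ ≤ k₀ + t := Nat.le_add_right _ _
        have hk2 : k₀ + t < k₀ + (d + 1) - 1 := by omega
        rw [show k₀ + (t + 1) = (k₀ + t) + 1 from rfl, hrec _ hk1 hk2 i]
        have heq : (fun j => γ (k₀ + t) * θt (k₀ + t) j) =
            (fun j => (γ (k₀ + t) * P t) * bmin G (t + 1) j (θ k₀)) := by
          funext j; rw [ih ht' j]; ring
        rw [heq]
        unfold nmin
        rw [inf'_const_mul _ _ (mul_nonneg (le_trans zero_le_one (hγ _)) (hPpos t).le) _]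
        rw [show (nbhd G i).inf' (nbhd_nonempty G i) (fun j => bmin G (t+1) j (θ k₀)) =
          nmin G i (fun j => bmin G (t+1) j (θ k₀)) from rfl, nmin_bmin hG]
        simp only [hP, Finset.prod_range_succ]
        ring
  have gclaim : ∀ t, t ≤ d → Finset.univ.inf' hne (θ (k₀ + t)) =
      P t * Finset.univ.inf' hne (θ k₀) := by
    intro t
    induction t with
    | zero => simp [hP]
    | succ t ih =>
        intro ht
        have ht' : t ≤ d := Nat.le_of_succ_le ht
        rw [show k₀ + (t + 1) = (k₀ + t) + 1 from rfl,
          hnodec _ (Nat.le_add_right _ _) (by omega), ih ht']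
        simp only [hP, Finset.prod_range_succ]
        ring
  intro i
  rw [hidx, claim d le_rfl i, gclaim d le_rfl]
  congr 1
  unfold bmin
  apply le_antisymm
  · exact Finset.le_inf' _ _ (fun j _ => Finset.inf'_le _ (by simp [ball, hD i j]))
  · exact Finset.le_inf' _ _ (fun j hj => Finset.inf'_le _ (Finset.mem_univ j))
end
end

section
/- Fix 0 < a ≤ b. There exists a constant C > 0, depending only on m, d, L, μ, W̃, c, a, b, with the following property. Let (X*, Y*) be a fixed point of the primal–dual update with uniform stepsizes (so X* = 1(x*)ᵀ for a minimizer x* of (1/m)Σ_i f_i, Y* = −∇F(X*) ∈ range(I − W)). Let (X, Y) ∈ ℝ^{m×d} × ℝ^{m×d} with Y ∈ range(I − W), let Θ = diag(θ₁,…,θ_m) with θ_i ∈ [a, b], θ_min := min_i θ_i, θ_max := max_i θ_i, and set X^{1/2} = WX, Y^{1/2} = W(Y + ∇F(X^{1/2})). Define the heterogeneous-stepsize step X_lc = X^{1/2} − Θ Y^{1/2}, Y_lc = Y^{1/2} + (I − W)Θ^{-1}X − ∇F(X^{1/2}), and the uniform-stepsize step X_gb = X^{1/2} − θ_min Y^{1/2},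 Y_gb = Y^{1/2} + θ_min^{-1}(I − W)X − ∇F(X^{1/2}). Then, with R := ‖X − X*‖_F + ‖Y − Y*‖_F, it holds that ‖X_gb − X_lc‖_F + ‖Y_gb − Y_lc‖_F ≤ C·(θ_max − θ_min)·max(‖X*‖_F, R). -/
open Matrix Finset
open scoped RealInnerProductSpace

noncomputable section

lemma fro2_nonneg {m d : ℕ} (A : Matrix (Fin m) (Fin d) ℝ) : 0 ≤ fro2 A := by
  apply Finset.sum_nonneg; intro i _; apply Finset.sum_nonneg; intro j _; positivity

lemma fro_nonneg {m d : ℕ} (A : Matrix (Fin m) (Fin d) ℝ) : 0 ≤ fro A := Real.sqrt_nonneg _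

lemma fro_sq {m d : ℕ} (A : Matrix (Fin m) (Fin d) ℝ) : fro A ^ 2 = fro2 A :=
  Real.sq_sqrt (fro2_nonneg A)

lemma fro_le_of_fro2_le {m d : ℕ} {A : Matrix (Fin m) (Fin d) ℝ} {t : ℝ} (ht : 0 ≤ t)
    (h : fro2 A ≤ t ^ 2) : fro A ≤ t := by
  rw [fro]
  calc Real.sqrt (fro2 A) ≤ Real.sqrt (t ^ 2) := Real.sqrt_le_sqrt h
  _ = t := by rw [Real.sqrt_sq ht]

def toE {m d : ℕ} (A : Matrix (Fin m) (Fin d) ℝ) : EuclideanSpace ℝ (Fin m × Fin d) :=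
  WithLp.toLp 2 (fun p => A p.1 p.2)

lemma fro_eq_norm {m d : ℕ} (A : Matrix (Fin m) (Fin d) ℝ) : fro A = ‖toE A‖ := by
  rw [EuclideanSpace.norm_eq, fro, fro2]
  congr 1
  simp [toE, Real.norm_eq_abs, sq_abs, Fintype.sum_prod_type]

lemma fro_add_le {m d : ℕ} (A B : Matrix (Fin m) (Fin d) ℝ) :
    fro (A + B) ≤ fro A + fro B := by
  rw [fro_eq_norm, fro_eq_norm, fro_eq_norm]
  have : toE (A + B) = toE A + toE B := rfl
  rw [this]; exact norm_add_le _ _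

lemma fro_mul_le {m n d : ℕ} (M : Matrix (Fin m) (Fin n) ℝ) (A : Matrix (Fin n) (Fin d) ℝ) :
    fro (M * A) ≤ fro M * fro A := by
  have h2 : fro2 (M * A) ≤ fro2 M * fro2 A := by
    rw [fro2, fro2, fro2]
    calc ∑ i, ∑ j, ((M * A) i j) ^ 2
        ≤ ∑ i, ∑ j, (∑ k, (M i k) ^ 2) * (∑ k, (A k j) ^ 2) := by
          apply Finset.sum_le_sum; intro i _; apply Finset.sum_le_sum; intro j _
          rw [Matrix.mul_apply]
          exact Finset.sum_mul_sq_le_sq_mul_sq _ _ _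
      _ = (∑ i, ∑ k, (M i k) ^ 2) * (∑ k, ∑ j, (A k j) ^ 2) := by
          rw [Finset.sum_mul_sum]
          congr 1; ext i
          rw [← Finset.mul_sum, ← Finset.mul_sum, Finset.sum_comm]
  rw [fro, fro, fro]
  calc Real.sqrt (fro2 (M * A)) ≤ Real.sqrt (fro2 M * fro2 A) := Real.sqrt_le_sqrt h2
  _ = _ := Real.sqrt_mul (fro2_nonneg M) _

lemma fro_rowscale_le {m d : ℕ} (dg : Fin m → ℝ) (t : ℝ) (ht : 0 ≤ t)
    (hd : ∀ i, |dg i| ≤ t) (A B : Matrix (Fin m) (Fin d) ℝ)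
    (hB : ∀ i j, B i j = dg i * A i j) : fro B ≤ t * fro A := by
  apply fro_le_of_fro2_le (mul_nonneg ht (fro_nonneg A))
  have : (t * fro A) ^ 2 = t ^ 2 * fro2 A := by rw [mul_pow, fro_sq]
  rw [this, fro2, fro2, Finset.mul_sum]
  apply Finset.sum_le_sum; intro i _
  rw [Finset.mul_sum]
  apply Finset.sum_le_sum; intro j _
  rw [hB, mul_pow]
  apply mul_le_mul_of_nonneg_right _ (sq_nonneg _)
  calc (dg i) ^ 2 = |dg i| ^ 2 := (sq_abs _).symm
  _ ≤ t ^ 2 := by apply pow_le_pow_left₀ (abs_nonneg _) (hd i)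

lemma sum_sq_eq_norm_sq {d : ℕ} (v : Vec d) : ∑ j, (v j) ^ 2 = ‖v‖ ^ 2 := by
  rw [EuclideanSpace.norm_eq, Real.sq_sqrt (by positivity)]
  simp [Real.norm_eq_abs, sq_abs]

lemma fro_matGrad_sub {m d : ℕ} (f : Fin m → Vec d → ℝ) (L : ℝ) (hL : 0 ≤ L)
    (hlip : ∀ i, ∀ x y : Vec d, ‖gradient (f i) x - gradient (f i) y‖ ≤ L * ‖x - y‖)
    (X Y : Matrix (Fin m) (Fin d) ℝ) :
    fro (matGrad f X - matGrad f Y) ≤ L * fro (X - Y) := by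
  apply fro_le_of_fro2_le (mul_nonneg hL (fro_nonneg _))
  have h : (L * fro (X - Y)) ^ 2 = L ^ 2 * fro2 (X - Y) := by rw [mul_pow, fro_sq]
  rw [h, fro2, fro2, Finset.mul_sum]
  apply Finset.sum_le_sum; intro i _
  have key : ∑ j, ((matGrad f X - matGrad f Y) i j) ^ 2
      = ‖gradient (f i) (mrow X i) - gradient (f i) (mrow Y i)‖ ^ 2 := by
    rw [← sum_sq_eq_norm_sq]
    congr 1
  rw [key]
  have h2 : ‖gradient (f i) (mrow X i) - gradient (f i) (mrow Y i)‖ ≤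
      L * ‖mrow X i - mrow Y i‖ := hlip i _ _
  have h3 : ‖mrow X i - mrow Y i‖ ^ 2 = ∑ j, ((X - Y) i j) ^ 2 := by
    rw [← sum_sq_eq_norm_sq]; congr 1
  calc ‖gradient (f i) (mrow X i) - gradient (f i) (mrow Y i)‖ ^ 2
      ≤ (L * ‖mrow X i - mrow Y i‖) ^ 2 := by
        apply pow_le_pow_left₀ (norm_nonneg _) h2
    _ = L ^ 2 * ∑ j, ((X - Y) i j) ^ 2 := by rw [mul_pow, h3]


set_option maxHeartbeats 2000000 in
/-- Lemma 1, upper bound: one-step comparison between the heterogeneous-stepsize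
update `(X_lc, Y_lc)` and the uniform-stepsize update `(X_gb, Y_gb)`: there is a constant
`C > 0` depending only on `m, d, L, μ, W̃, c, a, b` such that
`‖X_gb − X_lc‖ + ‖Y_gb − Y_lc‖ ≤ C (θ_max − θ_min) max(‖X*‖, R)`. -/
theorem one_step_discrepancy_upper {m d : ℕ} (hm : 2 ≤ m)
    (G : SimpleGraph (Fin m)) (hG : G.Connected)
    (Wt : Matrix (Fin m) (Fin m) ℝ) (hWt : IsGossip G Wt)
    (c : ℝ) (hc : c ∈ Set.Ioc (0 : ℝ) (1/2))
    (W : Matrix (Fin m) (Fin m) ℝ)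
    (hW : W = (1 - c) • (1 : Matrix (Fin m) (Fin m) ℝ) + c • Wt)
    (L μ : ℝ) (hL : 0 < L) (hμ : 0 ≤ μ)
    (a b : ℝ) (ha : 0 < a) (hab : a ≤ b) :
    ∃ C : ℝ, 0 < C ∧
      ∀ (f : Fin m → Vec d → ℝ),
        (∀ i, Differentiable ℝ (f i)) →
        (∀ i, ∀ x y : Vec d, ‖gradient (f i) x - gradient (f i) y‖ ≤ L * ‖x - y‖) →
        (∀ i, ConvexOn ℝ Set.univ (fun x : Vec d => f i x - μ / 2 * ‖x‖ ^ 2)) →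
      ∀ (xs : Vec d), (∀ x : Vec d, (1/m : ℝ) * ∑ i, f i xs ≤ (1/m : ℝ) * ∑ i, f i x) →
      ∀ (Xs Ys : Matrix (Fin m) (Fin d) ℝ),
        Xs = (fun _ j => xs j) → Ys = - matGrad f Xs →
        (∃ Z, Ys = ((1 : Matrix (Fin m) (Fin m) ℝ) - W) * Z) →
      ∀ (X Y : Matrix (Fin m) (Fin d) ℝ),
        (∃ Z, Y = ((1 : Matrix (Fin m) (Fin m) ℝ) - W) * Z) →
      ∀ (θ : Fin m → ℝ), (∀ i, θ i ∈ Set.Icc a b) →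
      ∀ (θmin θmax : ℝ),
        ((∀ i, θmin ≤ θ i) ∧ ∃ i, θ i = θmin) →
        ((∀ i, θ i ≤ θmax) ∧ ∃ i, θ i = θmax) →
      ∀ (Xh Yh Xlc Ylc Xgb Ygb : Matrix (Fin m) (Fin d) ℝ),
        Xh = W * X →
        Yh = W * (Y + matGrad f Xh) →
        Xlc = Xh - Matrix.diagonal θ * Yh →
        Ylc = Yh + ((1 : Matrix (Fin m) (Fin m) ℝ) - W) *
          Matrix.diagonal (fun i => (θ i)⁻¹) * X - matGrad f Xh →
        Xgb = Xh - θmin • Yh →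
        Ygb = Yh + θmin⁻¹ • (((1 : Matrix (Fin m) (Fin m) ℝ) - W) * X) - matGrad f Xh →
        fro (Xgb - Xlc) + fro (Ygb - Ylc) ≤
          C * (θmax - θmin) * max (fro Xs) (fro (X - Xs) + fro (Y - Ys)) := by
  have hNW : (0:ℝ) ≤ fro W := fro_nonneg _
  have hNI : (0:ℝ) ≤ fro ((1 : Matrix (Fin m) (Fin m) ℝ) - W) := fro_nonneg _
  refine ⟨fro W * (1 + L * fro W) + 2 * fro ((1 : Matrix (Fin m) (Fin m) ℝ) - W) / a ^ 2 + 1,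
    ?_, ?_⟩
  · have h1 : 0 ≤ fro W * (1 + L * fro W) :=
      mul_nonneg hNW (by nlinarith)
    have h2 : 0 ≤ 2 * fro ((1 : Matrix (Fin m) (Fin m) ℝ) - W) / a ^ 2 := by positivity
    linarith
  intro f hdiff hlip hconv xs hxs Xs Ys hXs hYs hYsr X Y hYr θ hθ θmin θmax hmin hmax
    Xh Yh Xlc Ylc Xgb Ygb hXh hYh hXlc hYlc hXgb hYgb
  obtain ⟨hc0, hc1⟩ := hc
  -- notation
  set R : ℝ := fro (X - Xs) + fro (Y - Ys) with hRdef
  set M : ℝ := max (fro Xs) R with hMdef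
  have hu : (0:ℝ) ≤ fro (X - Xs) := fro_nonneg _
  have hv : (0:ℝ) ≤ fro (Y - Ys) := fro_nonneg _
  have hR0 : 0 ≤ R := by rw [hRdef]; linarith
  have hM0 : 0 ≤ M := le_trans hR0 (le_max_right _ _)
  have hRM : R ≤ M := le_max_right _ _
  have hXsM : fro Xs ≤ M := le_max_left _ _
  -- theta facts
  have hamin : a ≤ θmin := by
    obtain ⟨i0, hi0⟩ := hmin.2
    rw [← hi0]; exact (hθ i0).1
  have hs : 0 ≤ θmax - θmin := by
    obtain ⟨i0, hi0⟩ := hmin.2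
    have := hmax.1 i0; rw [hi0] at this; linarith
  have hminpos : 0 < θmin := lt_of_lt_of_le ha hamin
  -- row sums of W
  have hrow : ∀ i, ∑ k, W i k = 1 := by
    intro i
    rw [hW]
    have h1 : ∑ k, (1 : Matrix (Fin m) (Fin m) ℝ) i k = 1 := by
      simp [Matrix.one_apply]
    calc ∑ k, ((1 - c) • (1 : Matrix (Fin m) (Fin m) ℝ) + c • Wt) i k
        = ∑ k, ((1 - c) * (1 : Matrix (Fin m) (Fin m) ℝ) i k + c * Wt i k) := by
          apply Finset.sum_congr rfl; intro k _
          simp [Matrix.add_apply, Matrix.smul_apply, smul_eq_mul]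
      _ = (1 - c) * (∑ k, (1 : Matrix (Fin m) (Fin m) ℝ) i k) + c * (∑ k, Wt i k) := by
          rw [Finset.sum_add_distrib, Finset.mul_sum, Finset.mul_sum]
      _ = 1 := by rw [h1, hWt.row_sum i]; ring
  have hWXs : W * Xs = Xs := by
    ext i j
    rw [Matrix.mul_apply]
    simp only [hXs]
    rw [← Finset.sum_mul, hrow i, one_mul]
  have hXhXs : Xh - Xs = W * (X - Xs) := by rw [hXh, Matrix.mul_sub, hWXs]
  -- bound on fro Yh
  have hYhe : Yh = W * ((Y - Ys) + (matGrad f Xh - matGrad f Xs)) := by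
    rw [hYh]; congr 1; rw [hYs]; abel
  have hGb : fro (matGrad f Xh - matGrad f Xs) ≤ L * (fro W * fro (X - Xs)) := by
    calc fro (matGrad f Xh - matGrad f Xs) ≤ L * fro (Xh - Xs) :=
        fro_matGrad_sub f L hL.le hlip _ _
    _ = L * fro (W * (X - Xs)) := by rw [hXhXs]
    _ ≤ L * (fro W * fro (X - Xs)) :=
        mul_le_mul_of_nonneg_left (fro_mul_le _ _) hL.le
  have hYhb : fro Yh ≤ fro W * ((1 + L * fro W) * M) := by
    calc fro Yh ≤ fro W * fro ((Y - Ys) + (matGrad f Xh - matGrad f Xs)) := by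
          rw [hYhe]; exact fro_mul_le _ _
    _ ≤ fro W * (fro (Y - Ys) + fro (matGrad f Xh - matGrad f Xs)) :=
        mul_le_mul_of_nonneg_left (fro_add_le _ _) hNW
    _ ≤ fro W * ((1 + L * fro W) * M) := by
        apply mul_le_mul_of_nonneg_left _ hNW
        have h1 : fro (Y - Ys) ≤ M := by
          apply le_trans _ hRM; rw [hRdef]; linarith
        have h2 : fro (X - Xs) ≤ M := by
          apply le_trans _ hRM; rw [hRdef]; linarith
        have h3 : fro (matGrad f Xh - matGrad f Xs) ≤ L * (fro W * M) := by
          apply le_trans hGb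
          apply mul_le_mul_of_nonneg_left _ hL.le
          exact mul_le_mul_of_nonneg_left h2 hNW
        nlinarith [mul_nonneg (mul_nonneg hL.le hNW) hM0]
  -- bound 1
  have he1 : ∀ i j, (Xgb - Xlc) i j = (θ i - θmin) * Yh i j := by
    intro i j
    rw [hXgb, hXlc]
    simp only [Matrix.sub_apply, Matrix.smul_apply, Matrix.diagonal_mul, smul_eq_mul]
    ring
  have hbd1 : fro (Xgb - Xlc) ≤ (θmax - θmin) * fro Yh := by
    apply fro_rowscale_le (fun i => θ i - θmin) (θmax - θmin) hs _ Yh _ he1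
    intro i
    rw [abs_of_nonneg (sub_nonneg.2 (hmin.1 i))]
    have := hmax.1 i; linarith
  -- bound 2
  have he2 : Ygb - Ylc = ((1 : Matrix (Fin m) (Fin m) ℝ) - W) *
      (θmin⁻¹ • X - Matrix.diagonal (fun i => (θ i)⁻¹) * X) := by
    rw [hYgb, hYlc, Matrix.mul_sub, Matrix.mul_smul, Matrix.mul_assoc]
    abel
  have hD : ∀ i j, (θmin⁻¹ • X - Matrix.diagonal (fun i => (θ i)⁻¹) * X) i j
      = (θmin⁻¹ - (θ i)⁻¹) * X i j := by
    intro i j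
    simp only [Matrix.sub_apply, Matrix.smul_apply, Matrix.diagonal_mul, smul_eq_mul]
    ring
  have hDb : fro (θmin⁻¹ • X - Matrix.diagonal (fun i => (θ i)⁻¹) * X)
      ≤ ((θmax - θmin) / a ^ 2) * fro X := by
    apply fro_rowscale_le _ _ (by positivity) _ X _ hD
    intro i
    have hθi : a ≤ θ i := (hθ i).1
    have hipos : 0 < θ i := lt_of_lt_of_le ha hθi
    have hle : (θ i)⁻¹ ≤ θmin⁻¹ := by
      apply inv_anti₀ hminpos (hmin.1 i)
    rw [abs_of_nonneg (sub_nonneg.2 hle)]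
    have heq : θmin⁻¹ - (θ i)⁻¹ = (θ i - θmin) / (θmin * θ i) := by
      field_simp
    rw [heq]
    apply div_le_div₀ hs _ (by positivity) _
    · have := hmax.1 i; linarith
    · nlinarith [mul_le_mul hamin hθi ha.le hminpos.le]
  have hXb : fro X ≤ 2 * M := by
    have : X = Xs + (X - Xs) := by abel
    calc fro X = fro (Xs + (X - Xs)) := by rw [← this]
    _ ≤ fro Xs + fro (X - Xs) := fro_add_le _ _
    _ ≤ 2 * M := by
        have h2 : fro (X - Xs) ≤ M := by
          apply le_trans _ hRM; rw [hRdef]; linarith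
        linarith
  have hbd2 : fro (Ygb - Ylc) ≤ (2 * fro ((1 : Matrix (Fin m) (Fin m) ℝ) - W) / a ^ 2) *
      ((θmax - θmin) * M) := by
    calc fro (Ygb - Ylc)
        ≤ fro ((1 : Matrix (Fin m) (Fin m) ℝ) - W) *
          fro (θmin⁻¹ • X - Matrix.diagonal (fun i => (θ i)⁻¹) * X) := by
          rw [he2]; exact fro_mul_le _ _
      _ ≤ fro ((1 : Matrix (Fin m) (Fin m) ℝ) - W) * (((θmax - θmin) / a ^ 2) * fro X) :=
          mul_le_mul_of_nonneg_left hDb hNI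
      _ ≤ fro ((1 : Matrix (Fin m) (Fin m) ℝ) - W) * (((θmax - θmin) / a ^ 2) * (2 * M)) := by
          apply mul_le_mul_of_nonneg_left _ hNI
          exact mul_le_mul_of_nonneg_left hXb (by positivity)
      _ = (2 * fro ((1 : Matrix (Fin m) (Fin m) ℝ) - W) / a ^ 2) * ((θmax - θmin) * M) := by
          ring
  have hbd1' : fro (Xgb - Xlc) ≤ (fro W * (1 + L * fro W)) * ((θmax - θmin) * M) := by
    calc fro (Xgb - Xlc) ≤ (θmax - θmin) * fro Yh := hbd1
    _ ≤ (θmax - θmin) * (fro W * ((1 + L * fro W) * M)) :=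
        mul_le_mul_of_nonneg_left hYhb hs
    _ = (fro W * (1 + L * fro W)) * ((θmax - θmin) * M) := by ring
  have hsM : 0 ≤ (θmax - θmin) * M := mul_nonneg hs hM0
  have hgoal : (fro W * (1 + L * fro W) + 2 * fro ((1 : Matrix (Fin m) (Fin m) ℝ) - W) / a ^ 2 + 1)
      * (θmax - θmin) * M
      = (fro W * (1 + L * fro W)) * ((θmax - θmin) * M)
        + (2 * fro ((1 : Matrix (Fin m) (Fin m) ℝ) - W) / a ^ 2) * ((θmax - θmin) * M)
        + ((θmax - θmin) * M) := by ring
  rw [hgoal]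
  linarith
end
end

section
/- In the setting of the one-step comparison between the heterogeneous-stepsize update (X_lc, Y_lc) and the uniform-stepsize update (X_gb, Y_gb) started from (X, Y) with Y ∈ range(I − W) and stepsizes θ_i ∈ [a, b]: there exists a constant c' > 0, depending only on m, d, L, μ, W̃, c, a, b, such that whenever ‖X*‖_F ≥ 2 m^{3/2} R (with R := ‖X − X*‖_F + ‖Y − Y*‖_F), the dual discrepancy is bounded below by ‖Y_gb − Y_lc‖_F ≥ c'·(θ_max − θ_min)·max(‖X*‖_F, R). -/
open Matrix Finset
open scoped RealInnerProductSpace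

noncomputable section

section Aux

lemma eig_one_const {m : ℕ} {G : SimpleGraph (Fin m)} (hG : G.Connected)
    {Wt : Matrix (Fin m) (Fin m) ℝ} (hWt : IsGossip G Wt)
    {v : Fin m → ℝ} (hv : Wt *ᵥ v = v) : ∀ i j, v i = v j := by
  have hnn : ∀ i j, 0 ≤ Wt i j := by
    intro i j
    by_cases h : i = j
    · subst h; exact (hWt.diag_pos i).le
    · by_cases hadj : G.Adj i j
      · exact (hWt.adj_pos i j hadj).le
      · exact le_of_eq (hWt.not_adj i j h hadj).symm
  have : Nonempty (Fin m) := hG.nonempty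
  obtain ⟨i0, -, hi0⟩ := Finset.exists_max_image Finset.univ v ⟨Classical.arbitrary (Fin m), Finset.mem_univ _⟩
  set M := v i0 with hM
  have hle : ∀ j, v j ≤ M := fun j => hi0 j (Finset.mem_univ j)
  have step : ∀ i, v i = M → ∀ k, G.Adj i k → v k = M := by
    intro i hi k hadj
    have h1 : ∑ j, Wt i j * v j = M := by
      have := congrFun hv i
      simpa [Matrix.mulVec, dotProduct, hi] using this
    have h2 : ∑ j, Wt i j * (M - v j) = 0 := by
      have hrs := hWt.row_sum i
      have : ∑ j, Wt i j * (M - v j) = (∑ j, Wt i j) * M - ∑ j, Wt i j * v j := by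
        rw [Finset.sum_mul, ← Finset.sum_sub_distrib]
        congr 1; ext j; ring
      rw [this, hrs, h1]; ring
    have hterm : ∀ j ∈ Finset.univ, (0:ℝ) ≤ Wt i j * (M - v j) := by
      intro j _
      exact mul_nonneg (hnn i j) (by linarith [hle j])
    have := (Finset.sum_eq_zero_iff_of_nonneg hterm).mp h2 k (Finset.mem_univ k)
    have hpos := hWt.adj_pos i k hadj
    have : M - v k = 0 := by
      rcases mul_eq_zero.mp this with h | h
      · exact absurd h hpos.ne'
      · exact h
    linarith
  have walkprop : ∀ (x y : Fin m) (p : G.Walk x y), v x = M → v y = M := by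
    intro x y p
    induction p with
    | nil => exact id
    | cons h q ih => exact fun hx => ih (step _ hx _ h)
  have hall : ∀ j, v j = M := by
    intro j
    obtain ⟨p⟩ := hG.preconnected i0 j
    exact walkprop i0 j p rfl
  intro i j; rw [hall i, hall j]

lemma ker_const {m : ℕ} {G : SimpleGraph (Fin m)} (hG : G.Connected)
    {Wt : Matrix (Fin m) (Fin m) ℝ} (hWt : IsGossip G Wt)
    {c : ℝ} (hc : 0 < c) {W : Matrix (Fin m) (Fin m) ℝ}
    (hW : W = (1 - c) • (1 : Matrix (Fin m) (Fin m) ℝ) + c • Wt)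
    {v : Fin m → ℝ} (hv : (1 - W) *ᵥ v = 0) (hsum : ∑ i, v i = 0) : v = 0 := by
  have h1 : (1 - W) = c • ((1 : Matrix (Fin m) (Fin m) ℝ) - Wt) := by
    rw [hW]; ext i j
    simp [Matrix.sub_apply, Matrix.add_apply, Matrix.smul_apply, Matrix.one_apply]
    by_cases h : i = j <;> simp [h] <;> ring
  have h2 : ((1 : Matrix (Fin m) (Fin m) ℝ) - Wt) *ᵥ v = 0 := by
    rw [h1, Matrix.smul_mulVec] at hv
    have := smul_eq_zero.mp hv
    rcases this with h | h
    · exact absurd h hc.ne'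
    · exact h
  have h3 : Wt *ᵥ v = v := by
    rw [Matrix.sub_mulVec, Matrix.one_mulVec] at h2
    have := sub_eq_zero.mp h2
    exact this.symm
  have hconst := eig_one_const hG hWt h3
  have : Nonempty (Fin m) := hG.nonempty
  have i0 := Classical.arbitrary (Fin m)
  have hall : ∀ j, v j = v i0 := fun j => hconst j i0
  have hm0 : (0:ℝ) < m := by
    have h0 : 0 < m := Nat.pos_of_ne_zero (by rintro rfl; exact absurd (Classical.arbitrary (Fin 0)).2 (by simp))
    exact_mod_cast h0
  have : ∑ i, v i = m * v i0 := by
    rw [Finset.sum_congr rfl (fun i _ => hall i)]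
    simp [Finset.card_univ, mul_comm]
  rw [hsum] at this
  have hv0 : v i0 = 0 := by
    rcases mul_eq_zero.mp this.symm with h | h
    · exact absurd h hm0.ne'
    · exact h
  funext j; rw [hall j, hv0]; rfl


lemma gap_sq {m : ℕ} {G : SimpleGraph (Fin m)} (hG : G.Connected)
    {Wt : Matrix (Fin m) (Fin m) ℝ} (hWt : IsGossip G Wt)
    {c : ℝ} (hc : 0 < c) {W : Matrix (Fin m) (Fin m) ℝ}
    (hW : W = (1 - c) • (1 : Matrix (Fin m) (Fin m) ℝ) + c • Wt) :
    ∃ lam : ℝ, 0 < lam ∧ ∀ v : Fin m → ℝ, (∑ i, v i = 0) →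
      lam * ∑ i, (v i)^2 ≤ ∑ i, (((1 - W) *ᵥ v) i)^2 := by
  have : Nonempty (Fin m) := hG.nonempty
  have hm0 : (0:ℝ) < m := by
    have h0 : 0 < m := Nat.pos_of_ne_zero (by rintro rfl; exact absurd (Classical.arbitrary (Fin 0)).2 (by simp))
    exact_mod_cast h0
  -- sum functional
  let S : (Fin m → ℝ) →ₗ[ℝ] ℝ := ∑ i, LinearMap.proj i
  have hS : ∀ v : Fin m → ℝ, S v = ∑ i, v i := by
    intro v; simp [S, LinearMap.sum_apply]
  let V : Submodule ℝ (Fin m → ℝ) := LinearMap.ker S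
  let T : V →ₗ[ℝ] (Fin m → ℝ) := (Matrix.mulVecLin (1 - W)).comp V.subtype
  have hker : LinearMap.ker T = ⊥ := by
    rw [LinearMap.ker_eq_bot']
    intro x hx
    have hx1 : (1 - W) *ᵥ (x : Fin m → ℝ) = 0 := hx
    have hx2 : ∑ i, (x : Fin m → ℝ) i = 0 := by
      have := x.2
      rw [LinearMap.mem_ker] at this
      rw [← hS]; exact this
    have := ker_const hG hWt hc hW hx1 hx2
    exact Subtype.ext this
  obtain ⟨K, hK, hanti⟩ := T.exists_antilipschitzWith hker
  refine ⟨((m : ℝ) * (K:ℝ)^2)⁻¹, by positivity, ?_⟩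
  intro v hv
  set u := (1 - W) *ᵥ v with hu
  have hmem : v ∈ V := by rw [LinearMap.mem_ker, hS]; exact hv
  set x : V := ⟨v, hmem⟩ with hx
  have hTx : T x = u := rfl
  have hxn : ‖x‖ = ‖v‖ := rfl
  have h1 : ‖v‖ ≤ (K:ℝ) * ‖u‖ := by
    have := hanti.le_mul_dist x 0
    simpa [hTx, dist_zero_right, map_zero, hxn] using this
  have hunorm : ‖u‖ ≤ Real.sqrt (∑ i, (u i)^2) := by
    apply pi_norm_le_iff_of_nonneg (Real.sqrt_nonneg _) |>.mpr
    intro i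
    rw [Real.norm_eq_abs]
    exact Real.abs_le_sqrt (Finset.single_le_sum (f := fun i => (u i)^2)
      (fun j _ => sq_nonneg _) (Finset.mem_univ i))
  have hu2 : ‖u‖^2 ≤ ∑ i, (u i)^2 := by
    have h := mul_self_le_mul_self (norm_nonneg u) hunorm
    rw [← pow_two, ← pow_two] at h
    calc ‖u‖^2 ≤ Real.sqrt (∑ i, (u i)^2)^2 := h
    _ = ∑ i, (u i)^2 := Real.sq_sqrt (by positivity)
  have hv2 : ∑ i, (v i)^2 ≤ (m:ℝ) * ‖v‖^2 := by
    calc ∑ i, (v i)^2 ≤ ∑ _i : Fin m, ‖v‖^2 := by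
          apply Finset.sum_le_sum
          intro i _
          have : |v i| ≤ ‖v‖ := by
            rw [← Real.norm_eq_abs]; exact norm_le_pi_norm v i
          nlinarith [abs_nonneg (v i), norm_nonneg v, sq_abs (v i)]
      _ = (m:ℝ) * ‖v‖^2 := by simp [Finset.card_univ, mul_comm]
  have hchain : ∑ i, (v i)^2 ≤ (m:ℝ) * (K:ℝ)^2 * ∑ i, (u i)^2 := by
    have h12 : ‖v‖^2 ≤ (K:ℝ)^2 * ‖u‖^2 := by nlinarith [norm_nonneg v, norm_nonneg u]
    calc ∑ i, (v i)^2 ≤ (m:ℝ) * ‖v‖^2 := hv2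
      _ ≤ (m:ℝ) * ((K:ℝ)^2 * ‖u‖^2) := by
          apply mul_le_mul_of_nonneg_left h12 hm0.le
      _ ≤ (m:ℝ) * ((K:ℝ)^2 * ∑ i, (u i)^2) := by
          apply mul_le_mul_of_nonneg_left _ hm0.le
          exact mul_le_mul_of_nonneg_left hu2 (by positivity)
      _ = (m:ℝ) * (K:ℝ)^2 * ∑ i, (u i)^2 := by ring
  have hmk : (0:ℝ) < (m:ℝ) * (K:ℝ)^2 := by positivity
  rw [inv_mul_le_iff₀ hmk] at *
  · linarith [hchain]

lemma colbound {m : ℕ} (hm0 : 0 < m) {W : Matrix (Fin m) (Fin m) ℝ}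
    {lam : ℝ} (hlamnn : 0 ≤ lam)
    (hlam : ∀ v : Fin m → ℝ, (∑ i, v i = 0) →
      lam * ∑ i, (v i)^2 ≤ ∑ i, (((1 - W) *ᵥ v) i)^2)
    (hrow : ∀ i, ∑ j, W i j = 1)
    (v : Fin m → ℝ) (i0 : Fin m) (h0 : v i0 = 0) :
    lam / (m+1) * ∑ i, (v i)^2 ≤ ∑ i, (((1 - W) *ᵥ v) i)^2 := by
  have hmR : (0:ℝ) < m := by exact_mod_cast hm0
  set μ := (∑ i, v i) / m with hμ
  set w : Fin m → ℝ := fun i => v i - μ with hw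
  have hsumw : ∑ i, w i = 0 := by
    simp only [hw, Finset.sum_sub_distrib, Finset.sum_const, Finset.card_univ, Fintype.card_fin,
      nsmul_eq_mul, hμ]
    field_simp
    ring
  have hmv : (1 - W) *ᵥ w = (1 - W) *ᵥ v := by
    funext i
    simp only [Matrix.mulVec, dotProduct, hw, Matrix.sub_apply, Matrix.one_apply]
    have hzero : ∑ x, ((if i = x then (1:ℝ) else 0) - W i x) = 0 := by
      rw [Finset.sum_sub_distrib]
      simp [hrow i]
    have expand : ∀ x, ((if i = x then (1:ℝ) else 0) - W i x) * (v x - μ)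
        = ((if i = x then (1:ℝ) else 0) - W i x) * v x
          - μ * ((if i = x then (1:ℝ) else 0) - W i x) := by intro x; ring
    rw [Finset.sum_congr rfl (fun x _ => expand x), Finset.sum_sub_distrib,
      ← Finset.mul_sum, hzero]
    ring
  have hvw : ∑ i, (v i)^2 ≤ (m+1) * ∑ i, (w i)^2 := by
    have hexp : ∑ i, (v i)^2 = ∑ i, (w i)^2 + 2*μ*(∑ i, w i) + m * μ^2 := by
      have : ∀ i, (v i)^2 = (w i)^2 + 2*μ*(w i) + μ^2 := by
        intro i; simp only [hw]; ring
      rw [Finset.sum_congr rfl (fun i _ => this i)]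
      rw [Finset.sum_add_distrib, Finset.sum_add_distrib, ← Finset.mul_sum]
      simp only [Finset.sum_const, Finset.card_univ, Fintype.card_fin, nsmul_eq_mul]
    have hμw : μ^2 = (w i0)^2 := by simp [hw, h0]
    have hw0 : (w i0)^2 ≤ ∑ i, (w i)^2 :=
      Finset.single_le_sum (f := fun i => (w i)^2) (fun j _ => sq_nonneg _) (Finset.mem_univ i0)
    rw [hexp, hsumw]
    nlinarith [hw0, hμw]
  have happ := hlam w hsumw
  rw [hmv] at happ
  have h2 : lam / (m+1) * ∑ i, (v i)^2 ≤ lam * ∑ i, (w i)^2 := by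
    rw [div_mul_eq_mul_div, div_le_iff₀ (by positivity)]
    calc lam * ∑ i, (v i)^2 ≤ lam * ((m+1) * ∑ i, (w i)^2) :=
          mul_le_mul_of_nonneg_left hvw hlamnn
      _ = (lam * ∑ i, (w i)^2) * (m+1) := by ring
  linarith

lemma l2_triangle {d : ℕ} (u v : Fin d → ℝ) :
    Real.sqrt (∑ j, (u j + v j)^2) ≤ Real.sqrt (∑ j, (u j)^2) + Real.sqrt (∑ j, (v j)^2) := by
  have norm_eq : ∀ w : Fin d → ℝ,
      ‖(WithLp.equiv 2 (Fin d → ℝ)).symm w‖ = Real.sqrt (∑ j, (w j)^2) := by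
    intro w
    rw [EuclideanSpace.norm_eq]
    congr 1
    apply Finset.sum_congr rfl
    intro j _
    simp [Real.norm_eq_abs, sq_abs]
  have hadd : (WithLp.equiv 2 (Fin d → ℝ)).symm (fun j => u j + v j)
      = (WithLp.equiv 2 (Fin d → ℝ)).symm u + (WithLp.equiv 2 (Fin d → ℝ)).symm v := rfl
  calc Real.sqrt (∑ j, (u j + v j)^2)
      = ‖(WithLp.equiv 2 (Fin d → ℝ)).symm (fun j => u j + v j)‖ := (norm_eq _).symm
    _ ≤ ‖(WithLp.equiv 2 (Fin d → ℝ)).symm u‖ + ‖(WithLp.equiv 2 (Fin d → ℝ)).symm v‖ := by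
        rw [hadd]; exact norm_add_le _ _
    _ = _ := by rw [norm_eq, norm_eq]

end Aux

set_option maxHeartbeats 1000000 in
/-- Lemma 1, lower bound: in the same one-step comparison, there is a constant
`c' > 0` depending only on `m, d, L, μ, W̃, c, a, b` such that whenever
`‖X*‖_F ≥ 2 m^{3/2} R`, the dual discrepancy satisfies
`‖Y_gb − Y_lc‖ ≥ c' (θ_max − θ_min) max(‖X*‖, R)`. -/
theorem one_step_discrepancy_lower {m d : ℕ} (hm : 2 ≤ m)
    (G : SimpleGraph (Fin m)) (hG : G.Connected)
    (Wt : Matrix (Fin m) (Fin m) ℝ) (hWt : IsGossip G Wt)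
    (c : ℝ) (hc : c ∈ Set.Ioc (0 : ℝ) (1/2))
    (W : Matrix (Fin m) (Fin m) ℝ)
    (hW : W = (1 - c) • (1 : Matrix (Fin m) (Fin m) ℝ) + c • Wt)
    (L μ : ℝ) (hL : 0 < L) (hμ : 0 ≤ μ)
    (a b : ℝ) (ha : 0 < a) (hab : a ≤ b) :
    ∃ c' : ℝ, 0 < c' ∧
      ∀ (f : Fin m → Vec d → ℝ),
        (∀ i, Differentiable ℝ (f i)) →
        (∀ i, ∀ x y : Vec d, ‖gradient (f i) x - gradient (f i) y‖ ≤ L * ‖x - y‖) →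
        (∀ i, ConvexOn ℝ Set.univ (fun x : Vec d => f i x - μ / 2 * ‖x‖ ^ 2)) →
      ∀ (xs : Vec d), (∀ x : Vec d, (1/m : ℝ) * ∑ i, f i xs ≤ (1/m : ℝ) * ∑ i, f i x) →
      ∀ (Xs Ys : Matrix (Fin m) (Fin d) ℝ),
        Xs = (fun _ j => xs j) → Ys = - matGrad f Xs →
        (∃ Z, Ys = ((1 : Matrix (Fin m) (Fin m) ℝ) - W) * Z) →
      ∀ (X Y : Matrix (Fin m) (Fin d) ℝ),
        (∃ Z, Y = ((1 : Matrix (Fin m) (Fin m) ℝ) - W) * Z) →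
      ∀ (θ : Fin m → ℝ), (∀ i, θ i ∈ Set.Icc a b) →
      ∀ (θmin θmax : ℝ),
        ((∀ i, θmin ≤ θ i) ∧ ∃ i, θ i = θmin) →
        ((∀ i, θ i ≤ θmax) ∧ ∃ i, θ i = θmax) →
      ∀ (Xh Yh Xlc Ylc Xgb Ygb : Matrix (Fin m) (Fin d) ℝ),
        Xh = W * X →
        Yh = W * (Y + matGrad f Xh) →
        Xlc = Xh - Matrix.diagonal θ * Yh →
        Ylc = Yh + ((1 : Matrix (Fin m) (Fin m) ℝ) - W) *
          Matrix.diagonal (fun i => (θ i)⁻¹) * X - matGrad f Xh →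
        Xgb = Xh - θmin • Yh →
        Ygb = Yh + θmin⁻¹ • (((1 : Matrix (Fin m) (Fin m) ℝ) - W) * X) - matGrad f Xh →
        2 * (m : ℝ) ^ ((3 : ℝ)/2) * (fro (X - Xs) + fro (Y - Ys)) ≤ fro Xs →
        c' * (θmax - θmin) * max (fro Xs) (fro (X - Xs) + fro (Y - Ys)) ≤
          fro (Ygb - Ylc) := by
  have hb : 0 < b := lt_of_lt_of_le ha hab
  have hm0 : 0 < m := by omega
  have hmR : (0:ℝ) < m := by exact_mod_cast hm0
  have hmR2 : (2:ℝ) ≤ m := by exact_mod_cast hm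
  obtain ⟨lam, hlam_pos, hlam⟩ := gap_sq hG hWt hc.1 hW
  set lamm : ℝ := lam / (m+1) with hlamm_def
  have hlamm_pos : 0 < lamm := by positivity
  refine ⟨Real.sqrt (lamm / (b^4 * 4 * m)), by positivity, ?_⟩
  intro f hdiff hlip hconv xs hxsmin Xs Ys hXs hYs hYsrange X Y hYrange θ hθ
    θmin θmax hθmin hθmax Xh Yh Xlc Ylc Xgb Ygb hXh hYh hXlc hYlc hXgb hYgb hlower
  set c' : ℝ := Real.sqrt (lamm / (b^4 * 4 * m)) with hc'def
  have hc'sq : c'^2 = lamm / (b^4 * 4 * m) := Real.sq_sqrt (by positivity)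
  set F : ℝ := fro Xs with hF_def
  set R : ℝ := fro (X - Xs) + fro (Y - Ys) with hR_def
  have hF0 : 0 ≤ F := fro_nonneg _
  have hR0 : 0 ≤ R := add_nonneg (fro_nonneg _) (fro_nonneg _)
  obtain ⟨i0, hi0⟩ := hθmin.2
  obtain ⟨i1, hi1⟩ := hθmax.2
  have hθmin_mem : θmin ∈ Set.Icc a b := hi0 ▸ hθ i0
  have hθmax_mem : θmax ∈ Set.Icc a b := hi1 ▸ hθ i1
  have hθminpos : 0 < θmin := lt_of_lt_of_le ha hθmin_mem.1
  have hθmaxpos : 0 < θmax := lt_of_lt_of_le ha hθmax_mem.1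
  have hdθ : 0 ≤ θmax - θmin := by
    have := hθmin.1 i1
    rw [hi1] at this
    linarith
  set dθ := θmax - θmin with hdθ_def
  -- the discrepancy matrix
  set s : Fin m → ℝ := fun i => θmin⁻¹ - (θ i)⁻¹ with hs_def
  have hs_i0 : s i0 = 0 := by simp [hs_def, hi0]
  have hs_i1 : s i1 = θmin⁻¹ - θmax⁻¹ := by simp [hs_def, hi1]
  have hN : Matrix.diagonal s
      = θmin⁻¹ • (1 : Matrix (Fin m) (Fin m) ℝ)
        - Matrix.diagonal (fun i => (θ i)⁻¹) := by
    ext i j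
    by_cases h : i = j <;>
      simp [Matrix.diagonal_apply, Matrix.one_apply, h, hs_def]
  have hD : Ygb - Ylc = (1 - W) * (Matrix.diagonal s * X) := by
    have h1 : Ygb - Ylc = θmin⁻¹ • (((1 : Matrix (Fin m) (Fin m) ℝ) - W) * X)
        - ((1 : Matrix (Fin m) (Fin m) ℝ) - W) *
          (Matrix.diagonal (fun i => (θ i)⁻¹) * X) := by
      rw [hYgb, hYlc, Matrix.mul_assoc]
      abel
    rw [h1, ← Matrix.mul_smul, ← Matrix.mul_sub]
    congr 1
    rw [hN, Matrix.sub_mul, Matrix.smul_mul, Matrix.one_mul]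
  -- row sums of W
  have hrowW : ∀ i, ∑ j, W i j = 1 := by
    intro i
    rw [hW]
    simp only [Matrix.add_apply, Matrix.smul_apply, smul_eq_mul]
    rw [Finset.sum_add_distrib, ← Finset.mul_sum, ← Finset.mul_sum, hWt.row_sum i]
    have : ∑ j, (1 : Matrix (Fin m) (Fin m) ℝ) i j = 1 := by
      simp [Matrix.one_apply]
    rw [this]; ring
  -- key1 : per-column spectral bound
  set NX := Matrix.diagonal s * X with hNX_def
  set D := ((1 : Matrix (Fin m) (Fin m) ℝ) - W) * NX with hD_def
  have key1 : lamm * fro2 NX ≤ fro2 D := by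
    have hcols : ∀ j : Fin d, lamm * ∑ i, (NX i j)^2 ≤ ∑ i, (D i j)^2 := by
      intro j
      have hDcol : ∀ i, D i j = (((1 : Matrix (Fin m) (Fin m) ℝ) - W) *ᵥ (fun k => NX k j)) i := by
        intro i
        simp [hD_def, Matrix.mul_apply, Matrix.mulVec, dotProduct]
      have h0 : (fun k => NX k j) i0 = 0 := by
        simp [hNX_def, Matrix.diagonal_mul, hs_i0]
      have := colbound hm0 hlam_pos.le hlam hrowW (fun k => NX k j) i0 h0
      calc lamm * ∑ i, (NX i j)^2
          = lam / (m+1) * ∑ i, ((fun k => NX k j) i)^2 := by rw [hlamm_def]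
        _ ≤ ∑ i, ((((1 : Matrix (Fin m) (Fin m) ℝ) - W) *ᵥ (fun k => NX k j)) i)^2 := this
        _ = ∑ i, (D i j)^2 := by
            apply Finset.sum_congr rfl
            intro i _
            rw [hDcol i]
    have hswap1 : fro2 NX = ∑ j, ∑ i, (NX i j)^2 := Finset.sum_comm
    have hswap2 : fro2 D = ∑ j, ∑ i, (D i j)^2 := Finset.sum_comm
    rw [hswap1, hswap2, Finset.mul_sum]
    exact Finset.sum_le_sum (fun j _ => hcols j)
  -- key2 : row i1 lower bound on fro2 NX
  set T2 : ℝ := ∑ j, (X i1 j)^2 with hT2_def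
  have hT2nn : 0 ≤ T2 := by positivity
  have key2 : (θmin⁻¹ - θmax⁻¹)^2 * T2 ≤ fro2 NX := by
    have hNXrow : ∀ j, NX i1 j = s i1 * X i1 j := by
      intro j; simp [hNX_def, Matrix.diagonal_mul]
    have : ∑ j, (NX i1 j)^2 = (θmin⁻¹ - θmax⁻¹)^2 * T2 := by
      rw [hT2_def, Finset.mul_sum]
      apply Finset.sum_congr rfl
      intro j _
      rw [hNXrow j, hs_i1]
      ring
    rw [← this]
    exact Finset.single_le_sum (f := fun i => ∑ j, (NX i j)^2)
      (fun i _ => by positivity) (Finset.mem_univ i1)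
  -- key3 : the row of X at i1 is large
  set S : ℝ := Real.sqrt m with hS_def
  have hS0 : 0 < S := Real.sqrt_pos.mpr hmR
  have hSS : S * S = m := Real.mul_self_sqrt hmR.le
  have hS1 : 1 ≤ S := by
    rw [hS_def, show (1:ℝ) = Real.sqrt 1 from Real.sqrt_one.symm]
    exact Real.sqrt_le_sqrt (by linarith)
  have key3 : F / (2 * S) ≤ Real.sqrt T2 := by
    -- triangle : sqrt (Σ xs²) ≤ sqrt T2 + sqrt (Σ (X-Xs) row)
    have htri : Real.sqrt (∑ j, (xs j)^2) ≤ Real.sqrt T2 + Real.sqrt (∑ j, ((Xs - X) i1 j)^2) := by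
      have : ∀ j, xs j = X i1 j + (Xs - X) i1 j := by
        intro j
        rw [hXs]
        simp [Matrix.sub_apply]
        change xs j = X i1 j + (xs j - X i1 j); ring
      calc Real.sqrt (∑ j, (xs j)^2)
          = Real.sqrt (∑ j, (X i1 j + (Xs - X) i1 j)^2) := by
            congr 1
            exact Finset.sum_congr rfl (fun j _ => by rw [← this j])
        _ ≤ _ := l2_triangle _ _
    have hex : Real.sqrt (∑ j, ((Xs - X) i1 j)^2) ≤ R := by
      have h1 : ∑ j, ((Xs - X) i1 j)^2 = ∑ j, ((X - Xs) i1 j)^2 := by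
        apply Finset.sum_congr rfl
        intro j _
        simp [Matrix.sub_apply]
        ring
      have h2 : ∑ j, ((X - Xs) i1 j)^2 ≤ fro2 (X - Xs) :=
        Finset.single_le_sum (f := fun i => ∑ j, ((X - Xs) i j)^2)
          (fun i _ => by positivity) (Finset.mem_univ i1)
      calc Real.sqrt (∑ j, ((Xs - X) i1 j)^2)
          = Real.sqrt (∑ j, ((X - Xs) i1 j)^2) := by rw [h1]
        _ ≤ Real.sqrt (fro2 (X - Xs)) := Real.sqrt_le_sqrt h2
        _ = fro (X - Xs) := rfl
        _ ≤ R := by rw [hR_def]; linarith [fro_nonneg (Y - Ys)]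
    have hxsF : Real.sqrt (∑ j, (xs j)^2) = F / S := by
      have hfro2Xs : fro2 Xs = m * ∑ j, (xs j)^2 := by
        rw [fro2]
        have : ∀ i : Fin m, ∑ j, (Xs i j)^2 = ∑ j, (xs j)^2 := by
          intro i
          apply Finset.sum_congr rfl
          intro j _
          rw [hXs]
        rw [Finset.sum_congr rfl (fun i _ => this i)]
        simp [Finset.card_univ, Fintype.card_fin]
      have : F = S * Real.sqrt (∑ j, (xs j)^2) := by
        rw [hF_def, fro, hfro2Xs, Real.sqrt_mul hmR.le, hS_def]
      rw [this]
      field_simp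
    -- hypothesis : 2 m^{3/2} R ≤ F
    have hrpow : (m : ℝ) ^ ((3 : ℝ)/2) = m * S := by
      rw [show (3:ℝ)/2 = 1 + 1/2 by norm_num, Real.rpow_add hmR, Real.rpow_one,
        hS_def, Real.sqrt_eq_rpow]
    have hB : 2 * ((m:ℝ) * S) * R ≤ F := by
      rw [← hrpow]; exact hlower
    have hA : F ≤ S * (Real.sqrt T2 + R) := by
      have h1 : F / S ≤ Real.sqrt T2 + R := by
        rw [← hxsF]
        calc Real.sqrt (∑ j, (xs j)^2) ≤ Real.sqrt T2 + Real.sqrt (∑ j, ((Xs - X) i1 j)^2) := htri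
          _ ≤ Real.sqrt T2 + R := by linarith
      calc F = S * (F / S) := by field_simp
        _ ≤ S * (Real.sqrt T2 + R) := mul_le_mul_of_nonneg_left h1 hS0.le
    rw [div_le_iff₀ (by positivity)]
    nlinarith [Real.sqrt_nonneg T2, mul_nonneg (mul_nonneg hS0.le hR0) (by linarith : (0:ℝ) ≤ (m:ℝ) - 1)]
  -- assemble
  have hmaxFR : max F R = F := by
    apply max_eq_left
    have h1 : 2 * ((m:ℝ) * S) * R ≤ F := by
      rw [← show (m : ℝ) ^ ((3 : ℝ)/2) = m * S from by
        rw [show (3:ℝ)/2 = 1 + 1/2 by norm_num, Real.rpow_add hmR, Real.rpow_one,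
          hS_def, Real.sqrt_eq_rpow]]
      exact hlower
    have h2 : (0:ℝ) ≤ ((m:ℝ) - 2) * (S - 1) :=
      mul_nonneg (by linarith) (by linarith)
    have h3 : (0:ℝ) ≤ 2*((m:ℝ)*S) - 1 := by linarith [h2, hmR2, hS1]
    have h4 : (0:ℝ) ≤ (2*((m:ℝ)*S) - 1) * R := mul_nonneg h3 hR0
    linarith [h1, h4]
  have hsmax : dθ / b^2 ≤ θmin⁻¹ - θmax⁻¹ := by
    have heq : θmin⁻¹ - θmax⁻¹ = dθ / (θmin * θmax) := by
      rw [hdθ_def]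
      field_simp
    rw [heq]
    apply div_le_div_of_nonneg_left hdθ (by positivity)
    calc θmin * θmax ≤ b * b := by
          apply mul_le_mul hθmin_mem.2 hθmax_mem.2 hθmaxpos.le hb.le
      _ = b^2 := by ring
  have hsmax_sq : (dθ/b^2)^2 ≤ (θmin⁻¹ - θmax⁻¹)^2 := by
    apply sq_le_sq'
    · linarith [hsmax, div_nonneg hdθ (sq_nonneg b)]
    · exact hsmax
  have hT2low : (F/(2*S))^2 ≤ T2 := by
    have h0 : 0 ≤ F/(2*S) := div_nonneg hF0 (by positivity)
    have h1 : (F/(2*S))^2 ≤ Real.sqrt T2 ^ 2 := pow_le_pow_left₀ h0 key3 2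
    rwa [Real.sq_sqrt hT2nn] at h1
  have step1 : lamm * ((θmin⁻¹ - θmax⁻¹)^2 * T2) ≤ fro2 D :=
    le_trans (mul_le_mul_of_nonneg_left key2 hlamm_pos.le) key1
  have step2 : lamm * ((dθ/b^2)^2 * (F/(2*S))^2) ≤ lamm * ((θmin⁻¹ - θmax⁻¹)^2 * T2) := by
    apply mul_le_mul_of_nonneg_left _ hlamm_pos.le
    apply mul_le_mul hsmax_sq hT2low (by positivity) (sq_nonneg _)
  have hfinal : (c' * dθ * F)^2 = lamm * ((dθ/b^2)^2 * (F/(2*S))^2) := by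
    have h4S : (2*S)^2 = 4*(m:ℝ) := by
      rw [mul_pow, show S^2 = S*S from sq S, hSS]; norm_num
    rw [mul_pow, mul_pow, hc'sq, div_pow, div_pow, h4S]
    have hb0 : b ≠ 0 := hb.ne'
    have hm0' : (m:ℝ) ≠ 0 := hmR.ne'
    field_simp
  have hgoal2 : (c' * dθ * F)^2 ≤ fro2 D := by
    rw [hfinal]
    linarith
  have hc'0 : 0 ≤ c' := Real.sqrt_nonneg _
  have h0 : 0 ≤ c' * dθ * F := mul_nonneg (mul_nonneg hc'0 hdθ) hF0
  have hgoal : c' * dθ * F ≤ fro D := by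
    have := (Real.le_sqrt h0 (fro2_nonneg D)).mpr hgoal2
    exact this
  calc c' * dθ * max F R = c' * dθ * F := by rw [hmaxFR]
    _ ≤ fro D := hgoal
    _ = fro (Ygb - Ylc) := congrArg fro hD.symm
end
end
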